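/- arXiv:2510.20662 — 6 statements merged into one kernel-verified Lean document; each statement's English description precedes it below -/
import Mathlib

section
/- An operator T on H_- ⊗ H_+ is reflection positive (i.e. Tr(T (Θ(X) ⊗ X)) ≥ 0 for all X ∈ B(H_+)) if and only if the superoperator O T O⁻¹ on B(H_+) is completely positive. -/
open Matrix Kronecker BigOperators
open scoped ComplexOrder

/-- The canonical identification `O : H₋ ⊗ H₊ → B(H₊)`, `O(θ̂|η⟩ ⊗ |ξ⟩) = |ξ⟩⟨η|`. -/
def Omap {n : ℕ} (ζ : Fin n × Fin n → ℂ) : Matrix (Fin n) (Fin n) ℂ :=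
  Matrix.of fun b a => ζ (a, b)

/-- The inverse of `Omap`. -/
def OmapInv {n : ℕ} (Y : Matrix (Fin n) (Fin n) ℂ) : Fin n × Fin n → ℂ :=
  fun p => Y p.2 p.1

/-- The anti-linear *-isomorphism `Θ(X) = θ̂ X θ̂⁻¹` (entrywise conjugation). -/
def thetaMap {n : ℕ} (X : Matrix (Fin n) (Fin n) ℂ) : Matrix (Fin n) (Fin n) ℂ :=
  X.map (starRingEnd ℂ)

/-- Reflection positivity of an operator `T` on `H₋ ⊗ H₊`:
`Tr(T (Θ(X) ⊗ X)) ≥ 0` for all `X ∈ B(H₊)`. -/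
def IsRP {n : ℕ} (T : Matrix (Fin n × Fin n) (Fin n × Fin n) ℂ) : Prop :=
  ∀ X : Matrix (Fin n) (Fin n) ℂ, 0 ≤ (T * (thetaMap X ⊗ₖ X)).trace

/-- The amplification `Φ ⊗ id_{M_k}` of a superoperator. -/
def tensorAmp {n : ℕ} (k : ℕ)
    (Φ : Matrix (Fin n) (Fin n) ℂ → Matrix (Fin n) (Fin n) ℂ)
    (M : Matrix (Fin n × Fin k) (Fin n × Fin k) ℂ) :
    Matrix (Fin n × Fin k) (Fin n × Fin k) ℂ :=
  Matrix.of fun p q => Φ (Matrix.of fun i j => M (i, p.2) (j, q.2)) p.1 q.1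

/-- Complete positivity of a superoperator on `B(H₊)`:
every amplification maps positive operators to positive operators. -/
def IsCP {n : ℕ} (Φ : Matrix (Fin n) (Fin n) ℂ → Matrix (Fin n) (Fin n) ℂ) : Prop :=
  ∀ (k : ℕ) (M : Matrix (Fin n × Fin k) (Fin n × Fin k) ℂ),
    M.PosSemidef → (tensorAmp k Φ M).PosSemidef

/-- A complex matrix with nonnegative quadratic form is Hermitian. -/
lemma RPaux.herm_of_nonneg {m : Type*} [Fintype m] [DecidableEq m] {A : Matrix m m ℂ}
    (h : ∀ x : m → ℂ, 0 ≤ star x ⬝ᵥ A *ᵥ x) : A.IsHermitian := by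
  rw [Matrix.isHermitian_iff_isSymmetric]
  rw [LinearMap.isSymmetric_iff_inner_map_self_real]
  intro v
  have h2 : (inner ℂ v (A.toEuclideanLin v) : ℂ) =
      star ((WithLp.equiv 2 _) v) ⬝ᵥ A *ᵥ ((WithLp.equiv 2 _) v) := by
    rw [EuclideanSpace.inner_eq_star_dotProduct, dotProduct_comm]
    rfl
  have h3 := h ((WithLp.equiv 2 _) v)
  have h4 : (starRingEnd ℂ) (inner ℂ v (A.toEuclideanLin v) : ℂ) = inner ℂ v (A.toEuclideanLin v) := by
    rw [h2]
    exact Complex.conj_eq_iff_im.mpr (Complex.nonneg_iff.mp h3).2.symm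
  calc (starRingEnd ℂ) (inner ℂ (A.toEuclideanLin v) v : ℂ)
      = inner ℂ v (A.toEuclideanLin v) := by rw [inner_conj_symm]
    _ = (starRingEnd ℂ) (inner ℂ v (A.toEuclideanLin v)) := h4.symm
    _ = inner ℂ (A.toEuclideanLin v) v := by rw [inner_conj_symm]

/-- The master identity: the quadratic form of the amplified superoperator applied to
a Gram matrix equals a sum of reflection-positivity traces. -/
lemma RPaux.master {n k : ℕ} {ι : Type*} [Fintype ι]
    (T : Matrix (Fin n × Fin n) (Fin n × Fin n) ℂ)
    (B : ι → (Fin n × Fin k) → ℂ) (v : Fin n × Fin k → ℂ) :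
    star v ⬝ᵥ (tensorAmp k (fun Y => Omap (T *ᵥ OmapInv Y))
        (Matrix.of fun p q => ∑ u, (starRingEnd ℂ) (B u p) * B u q)) *ᵥ v =
      ∑ u, (T * (thetaMap (Matrix.of fun d i =>
          ∑ s, (starRingEnd ℂ) (B u (d, s)) * (starRingEnd ℂ) (v (i, s))) ⊗ₖ
        (Matrix.of fun d i =>
          ∑ s, (starRingEnd ℂ) (B u (d, s)) * (starRingEnd ℂ) (v (i, s))))).trace := by
  have hL : star v ⬝ᵥ (tensorAmp k (fun Y => Omap (T *ᵥ OmapInv Y))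
        (Matrix.of fun p q => ∑ u, (starRingEnd ℂ) (B u p) * B u q)) *ᵥ v =
      ∑ p : Fin n × Fin k, ∑ q : Fin n × Fin k, ∑ r : Fin n × Fin n,
        (starRingEnd ℂ) (v p) * (T (q.1, p.1) r *
          ((∑ u, (starRingEnd ℂ) (B u (r.2, p.2)) * B u (r.1, q.2)) * v q)) := by
    simp only [dotProduct, mulVec, tensorAmp, Omap, OmapInv, Matrix.of_apply, Pi.star_apply,
      Complex.star_def, Finset.mul_sum, Finset.sum_mul, mul_assoc]
  have hR : ∀ u : ι, (T * (thetaMap (Matrix.of fun d i =>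
          ∑ s, (starRingEnd ℂ) (B u (d, s)) * (starRingEnd ℂ) (v (i, s))) ⊗ₖ
        (Matrix.of fun d i =>
          ∑ s, (starRingEnd ℂ) (B u (d, s)) * (starRingEnd ℂ) (v (i, s))))).trace =
      ∑ p : Fin n × Fin n, ∑ q : Fin n × Fin n,
        T p q * ((∑ t, B u (q.1, t) * v (p.1, t)) *
          (∑ s, (starRingEnd ℂ) (B u (q.2, s)) * (starRingEnd ℂ) (v (p.2, s)))) := by
    intro u
    simp only [Matrix.trace, Matrix.diag, Matrix.mul_apply, kroneckerMap_apply, thetaMap,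
      Matrix.map_apply, Matrix.of_apply, map_sum, _root_.map_mul, Complex.conj_conj]
  rw [hL]
  rw [Finset.sum_congr rfl fun u _ => hR u]
  have L : (∑ p : Fin n × Fin k, ∑ q : Fin n × Fin k, ∑ r : Fin n × Fin n,
        (starRingEnd ℂ) (v p) * (T (q.1, p.1) r *
          ((∑ u, (starRingEnd ℂ) (B u (r.2, p.2)) * B u (r.1, q.2)) * v q)))
      = ∑ z : (Fin n × Fin k) × (Fin n × Fin k) × (Fin n × Fin n) × ι,
          (starRingEnd ℂ) (v z.1) * (T (z.2.1.1, z.1.1) z.2.2.1 *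
            ((starRingEnd ℂ) (B z.2.2.2 (z.2.2.1.2, z.1.2)) * B z.2.2.2 (z.2.2.1.1, z.2.1.2) * v z.2.1)) := by
    simp only [Fintype.sum_prod_type, Finset.mul_sum, Finset.sum_mul]
  have R : (∑ u : ι, ∑ p : Fin n × Fin n, ∑ q : Fin n × Fin n,
        T p q * ((∑ t, B u (q.1, t) * v (p.1, t)) *
          (∑ s, (starRingEnd ℂ) (B u (q.2, s)) * (starRingEnd ℂ) (v (p.2, s)))))
      = ∑ z : ι × (Fin n × Fin n) × (Fin n × Fin n) × Fin k × Fin k,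
          T z.2.1 z.2.2.1 * (B z.1 (z.2.2.1.1, z.2.2.2.2) * v (z.2.1.1, z.2.2.2.2) *
            ((starRingEnd ℂ) (B z.1 (z.2.2.1.2, z.2.2.2.1)) * (starRingEnd ℂ) (v (z.2.1.2, z.2.2.2.1)))) := by
    simp only [Fintype.sum_prod_type, Finset.mul_sum, Finset.sum_mul]
  rw [L, R]
  refine Fintype.sum_equiv
    (⟨fun x => (x.2.2.2, ((x.2.1.1, x.1.1), (x.2.2.1, (x.1.2, x.2.1.2)))),
      fun z => ((z.2.1.2, z.2.2.2.1), ((z.2.1.1, z.2.2.2.2), (z.2.2.1, z.1))),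
      by rintro ⟨⟨i, s⟩, ⟨j, t⟩, ⟨c, d⟩, u⟩; rfl,
      by rintro ⟨u, ⟨a, b⟩, ⟨c, d⟩, s, t⟩; rfl⟩ :
      ((Fin n × Fin k) × (Fin n × Fin k) × (Fin n × Fin n) × ι) ≃
      (ι × (Fin n × Fin n) × (Fin n × Fin n) × Fin k × Fin k)) _ _ ?_
  rintro ⟨⟨i, s⟩, ⟨j, t⟩, ⟨c, d⟩, u⟩
  dsimp only [Equiv.coe_fn_mk]
  ring

/-- `T` is reflection positive iff the superoperator `O T O⁻¹` is completely positive. -/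
theorem isRP_iff_isCP {n : ℕ} (T : Matrix (Fin n × Fin n) (Fin n × Fin n) ℂ) :
    IsRP T ↔ IsCP (fun Y => Omap (T *ᵥ OmapInv Y)) := by
  constructor
  · intro hRP k M hM
    obtain ⟨B, hB⟩ : ∃ B : Matrix (Fin n × Fin k) (Fin n × Fin k) ℂ, M = Bᴴ * B := by
      open scoped MatrixOrder in exact CStarAlgebra.nonneg_iff_eq_star_mul_self.mp hM.nonneg
    have hM' : M = Matrix.of fun p q => ∑ u, (starRingEnd ℂ) (B u p) * B u q := by
      rw [hB]
      ext p q
      simp [Matrix.mul_apply, Matrix.conjTranspose_apply, Complex.star_def]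
    have key : ∀ x : Fin n × Fin k → ℂ,
        0 ≤ star x ⬝ᵥ (tensorAmp k (fun Y => Omap (T *ᵥ OmapInv Y)) M) *ᵥ x := by
      intro x
      rw [hM', RPaux.master T (fun u p => B u p) x]
      exact Finset.sum_nonneg fun u _ => hRP _
    exact .of_dotProduct_mulVec_nonneg (RPaux.herm_of_nonneg key) key
  · intro hCP X
    set v : Fin n × Fin n → ℂ := fun p => if p.1 = p.2 then 1 else 0 with hv
    set B : Fin 1 → (Fin n × Fin n) → ℂ := fun _ p => (starRingEnd ℂ) (X p.1 p.2) with hBdef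
    set M : Matrix (Fin n × Fin n) (Fin n × Fin n) ℂ :=
      Matrix.of fun p q => ∑ u, (starRingEnd ℂ) (B u p) * B u q with hMdef
    have hMpsd : M.PosSemidef := by
      have : M = (Matrix.of fun (_ : Fin 1) p => B 0 p)ᴴ * (Matrix.of fun (_ : Fin 1) p => B 0 p) := by
        ext p q
        simp [hMdef, Matrix.mul_apply, Matrix.conjTranspose_apply, Complex.star_def]
      rw [this]
      exact Matrix.posSemidef_conjTranspose_mul_self _
    have h := (hCP n M hMpsd).dotProduct_mulVec_nonneg v
    rw [hMdef, RPaux.master T B v] at h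
    rw [Fin.sum_univ_one] at h
    have hX : (Matrix.of fun d i =>
        ∑ s, (starRingEnd ℂ) (B 0 (d, s)) * (starRingEnd ℂ) (v (i, s))) = X := by
      ext d i
      simp only [Matrix.of_apply, hBdef, hv, Complex.conj_conj, apply_ite, _root_.map_one, _root_.map_zero,
        mul_ite, mul_one, mul_zero]
      rw [Finset.sum_ite_eq]
      simp
    rwa [hX] at h
end

section
/- Let Ψ be a symmetric completely positive map on B(H) for a finite-dimensional Hilbert space H, and let p_max be the range projection of a Perron-Frobenius eigenvector with maximal support. Then Ψ(X p_max) = Ψ(X) p_max and Ψ(p_max X) = p_max Ψ(X) for all X ∈ B(H). Equivalently, every Kraus operator of Ψ commutes with p_max. -/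
open Matrix BigOperators
open scoped ComplexOrder

set_option maxHeartbeats 1000000

private lemma auxExt {n : ℕ} {M : Matrix (Fin n) (Fin n) ℂ}
    (h : ∀ v, M *ᵥ v = 0) : M = 0 := by
  ext i j
  have := congrFun (h (Pi.single j 1)) i
  simpa using this

private lemma auxTraceZero {n : ℕ} {X : Matrix (Fin n) (Fin n) ℂ}
    (h : (Xᴴ * X).trace = 0) : X = 0 := by
  have h0 : ∑ j : Fin n, ∑ i : Fin n, star (X i j) * X i j = 0 := by
    simpa [Matrix.trace, Matrix.diag, Matrix.mul_apply, Matrix.conjTranspose_apply] using h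
  ext i j
  have h1 := (Finset.sum_eq_zero_iff_of_nonneg
    (fun j _ => Finset.sum_nonneg fun i _ => star_mul_self_nonneg (X i j))).mp h0 j
    (Finset.mem_univ j)
  have h2 := (Finset.sum_eq_zero_iff_of_nonneg
    (fun i _ => star_mul_self_nonneg (X i j))).mp h1 i (Finset.mem_univ i)
  have h3 : (starRingEnd ℂ) (X i j) * X i j = 0 := h2
  simpa using h3

open scoped MatrixOrder in
private lemma posSemidef_iff_eq_transpose_mul_self {n : ℕ} {A : Matrix (Fin n) (Fin n) ℂ} :
    A.PosSemidef ↔ ∃ B : Matrix (Fin n) (Fin n) ℂ, A = Bᴴ * B := by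
  classical
  constructor
  · intro hA
    have h0 : 0 ≤ A := hA.nonneg
    obtain ⟨X, hX, -, hXA⟩ :=
      CFC.exists_sqrt_of_isSelfAdjoint_of_quasispectrumRestricts hA.isHermitian
        (QuasispectrumRestricts.nnreal_of_nonneg h0)
    exact ⟨X, by rw [← hXA, ← star_eq_conjTranspose, hX.star_eq]⟩
  · rintro ⟨B, rfl⟩
    exact posSemidef_conjTranspose_mul_self B

private lemma auxPSDTraceZero {n : ℕ} {A : Matrix (Fin n) (Fin n) ℂ}
    (hA : A.PosSemidef) (h : A.trace = 0) : A = 0 := by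
  obtain ⟨S, rfl⟩ := posSemidef_iff_eq_transpose_mul_self.mp hA
  rw [auxTraceZero h]
  simp

private lemma auxMulTraceZero {n : ℕ} {A B : Matrix (Fin n) (Fin n) ℂ}
    (hA : A.PosSemidef) (hB : B.PosSemidef) (h : (A * B).trace = 0) : A * B = 0 := by
  obtain ⟨S, rfl⟩ := posSemidef_iff_eq_transpose_mul_self.mp hA
  obtain ⟨T, rfl⟩ := posSemidef_iff_eq_transpose_mul_self.mp hB
  have h1 : ((T * Sᴴ)ᴴ * (T * Sᴴ)).trace = 0 := by
    have : (T * Sᴴ)ᴴ * (T * Sᴴ) = S * (Tᴴ * T) * Sᴴ := by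
      simp [Matrix.mul_assoc]
    rw [this, Matrix.trace_mul_comm (S * (Tᴴ * T)) Sᴴ, ← Matrix.mul_assoc]
    exact h
  have h2 : T * Sᴴ = 0 := auxTraceZero h1
  have h3 : S * Tᴴ = 0 := by
    have := congrArg conjTranspose h2
    simpa using this
  calc Sᴴ * S * (Tᴴ * T) = Sᴴ * ((S * Tᴴ) * T) := by simp [Matrix.mul_assoc]
  _ = 0 := by rw [h3]; simp

private lemma auxCancel {n : ℕ} {A q : Matrix (Fin n) (Fin n) ℂ}
    (hA : A.PosSemidef) (hq : qᴴ = q) (h : q * A * q = 0) : A * q = 0 ∧ q * A = 0 := by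
  obtain ⟨S, rfl⟩ := posSemidef_iff_eq_transpose_mul_self.mp hA
  have h1 : (S * q)ᴴ * (S * q) = 0 := by
    calc (S * q)ᴴ * (S * q) = q * (Sᴴ * S) * q := by simp [hq, Matrix.mul_assoc]
    _ = 0 := h
  have h2 : S * q = 0 := conjTranspose_mul_self_eq_zero.mp h1
  constructor
  · calc Sᴴ * S * q = Sᴴ * (S * q) := by rw [Matrix.mul_assoc]
    _ = 0 := by rw [h2]; simp
  · have : (Sᴴ * S * q)ᴴ = 0 := by
      rw [Matrix.mul_assoc, h2]; simp
    simpa [hq, Matrix.mul_assoc] using this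

private lemma cpBlock {n : ℕ} (Ψ : Matrix (Fin n) (Fin n) ℂ →ₗ[ℂ] Matrix (Fin n) (Fin n) ℂ)
    (hCP : IsCP (⇑Ψ)) (A B : Matrix (Fin n) (Fin n) ℂ) :
    ∃ N : Matrix (Fin n × Fin 2) (Fin n × Fin 2) ℂ, N.PosSemidef ∧
      ∀ (a b : Fin 2) (i j : Fin n),
        N (i, a) (j, b) = Ψ ((![A, B] a)ᴴ * (![A, B] b)) i j := by
  classical
  set C : Fin 2 → Matrix (Fin n) (Fin n) ℂ := ![A, B] with hC
  set W : Matrix (Fin n) (Fin n × Fin 2) ℂ := Matrix.of fun k jb => C jb.2 k jb.1 with hW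
  refine ⟨_, hCP 2 (Wᴴ * W) (posSemidef_conjTranspose_mul_self W), ?_⟩
  intro a b i j
  have key : (Matrix.of fun i' j' => (Wᴴ * W) (i', a) (j', b)) = (C a)ᴴ * C b := by
    ext i' j'
    simp [hW, Matrix.mul_apply, Matrix.conjTranspose_apply]
  show Ψ (Matrix.of fun i' j' => (Wᴴ * W) (i', a) (j', b)) i j = _
  rw [key]

private lemma vecCalc {n : ℕ} {N : Matrix (Fin n × Fin 2) (Fin n × Fin 2) ℂ}
    {M0 M1 : Matrix (Fin n) (Fin n) ℂ} (u : Fin n → ℂ)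
    (h0 : ∀ i j, N (i, 0) (j, 0) = M0 i j)
    (h1 : ∀ i j, N (i, 1) (j, 0) = M1 i j) :
    (∀ i, (N *ᵥ fun ib => if ib.2 = 0 then u ib.1 else 0) (i, 1) = (M1 *ᵥ u) i) ∧
    (star (fun ib : Fin n × Fin 2 => if ib.2 = 0 then u ib.1 else 0) ⬝ᵥ
      (N *ᵥ fun ib => if ib.2 = 0 then u ib.1 else 0)) = star u ⬝ᵥ (M0 *ᵥ u) := by
  set z : Fin n × Fin 2 → ℂ := fun ib => if ib.2 = 0 then u ib.1 else 0 with hz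
  have hmv : ∀ (a : Fin 2) (i : Fin n), (N *ᵥ z) (i, a) = ∑ j, N (i, a) (j, 0) * u j := by
    intro a i
    show (∑ jb : Fin n × Fin 2, N (i, a) jb * z jb) = _
    rw [Fintype.sum_prod_type]
    refine Finset.sum_congr rfl fun j _ => ?_
    rw [Fin.sum_univ_two]
    simp [hz]
  refine ⟨fun i => ?_, ?_⟩
  · rw [hmv 1 i]
    simp only [mulVec, dotProduct]
    exact Finset.sum_congr rfl fun j _ => by rw [h1]
  · show (∑ ib : Fin n × Fin 2, star (z ib) * (N *ᵥ z) ib) = _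
    rw [Fintype.sum_prod_type]
    have : ∀ i : Fin n, (∑ b : Fin 2, star (z (i, b)) * (N *ᵥ z) (i, b))
        = star (u i) * (M0 *ᵥ u) i := by
      intro i
      rw [Fin.sum_univ_two]
      have e0 : z (i, 0) = u i := by simp [hz]
      have e1 : z (i, 1) = 0 := by simp [hz]
      rw [e0, e1, hmv 0 i]
      simp only [star_zero, zero_mul, add_zero]
      congr 1
      simp only [mulVec, dotProduct]
      exact Finset.sum_congr rfl fun j _ => by rw [h0]
    rw [Finset.sum_congr rfl fun i _ => this i]
    rfl

private lemma psiPSD {n : ℕ} (Ψ : Matrix (Fin n) (Fin n) ℂ →ₗ[ℂ] Matrix (Fin n) (Fin n) ℂ)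
    (hCP : IsCP (⇑Ψ)) (A : Matrix (Fin n) (Fin n) ℂ) : (Ψ (Aᴴ * A)).PosSemidef := by
  obtain ⟨N, hN, hblk⟩ := cpBlock Ψ hCP A A
  have h0 : ∀ i j, N (i, 0) (j, 0) = Ψ (Aᴴ * A) i j := by
    intro i j; simpa using hblk 0 0 i j
  have h0' : ∀ i j, N (i, 1) (j, 0) = Ψ (Aᴴ * A) i j := by
    intro i j; simpa using hblk 1 0 i j
  refine posSemidef_iff_dotProduct_mulVec.mpr ⟨?_, ?_⟩
  · ext i j
    have h := congrFun (congrFun hN.1 (i, 0)) (j, 0)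
    simp only [conjTranspose_apply] at h ⊢
    rw [← h0 i j, ← h, h0 j i]
  · intro u
    obtain ⟨-, hdp⟩ := vecCalc u h0 h0'
    rw [← hdp]
    exact hN.dotProduct_mulVec_nonneg _

private lemma psiCS {n : ℕ} (Ψ : Matrix (Fin n) (Fin n) ℂ →ₗ[ℂ] Matrix (Fin n) (Fin n) ℂ)
    (hCP : IsCP (⇑Ψ)) (A B : Matrix (Fin n) (Fin n) ℂ) (u : Fin n → ℂ)
    (h : Ψ (Aᴴ * A) *ᵥ u = 0) : Ψ (Bᴴ * A) *ᵥ u = 0 := by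
  obtain ⟨N, hN, hblk⟩ := cpBlock Ψ hCP A B
  have h0 : ∀ i j, N (i, 0) (j, 0) = Ψ (Aᴴ * A) i j := by
    intro i j; simpa using hblk 0 0 i j
  have h1 : ∀ i j, N (i, 1) (j, 0) = Ψ (Bᴴ * A) i j := by
    intro i j; simpa using hblk 1 0 i j
  obtain ⟨hcol, hdp⟩ := vecCalc u h0 h1
  have hz : (N *ᵥ fun ib => if ib.2 = 0 then u ib.1 else 0) = 0 := by
    rw [← hN.dotProduct_mulVec_zero_iff]
    rw [hdp, h]
    simp
  funext i
  rw [← hcol i, hz]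
  rfl

private lemma psiAdj {n : ℕ} (Ψ : Matrix (Fin n) (Fin n) ℂ →ₗ[ℂ] Matrix (Fin n) (Fin n) ℂ)
    (hCP : IsCP (⇑Ψ)) (M : Matrix (Fin n) (Fin n) ℂ) : Ψ Mᴴ = (Ψ M)ᴴ := by
  obtain ⟨N, hN, hblk⟩ := cpBlock Ψ hCP 1 M
  have key : ∀ i j, Ψ M i j = star (Ψ Mᴴ j i) := by
    intro i j
    have hH := congrFun (congrFun hN.1 (i, 0)) (j, 1)
    simp only [conjTranspose_apply] at hH
    have e1 : N (i, 0) (j, 1) = Ψ M i j := by simpa using hblk 0 1 i j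
    have e2 : N (j, 1) (i, 0) = Ψ Mᴴ j i := by simpa using hblk 1 0 j i
    rw [e1, e2] at hH
    exact hH.symm
  ext i j
  simp only [conjTranspose_apply]
  rw [key j i, star_star]


/-- For a symmetric completely positive map `Ψ` on `B(H)` with Perron-Frobenius
eigenvector `Ξ` of maximal support, the range projection `p_max` of `Ξ` satisfies
`Ψ(X p_max) = Ψ(X) p_max` and `Ψ(p_max X) = p_max Ψ(X)` for all `X`. -/
theorem pmax_bimodule {n : ℕ}
    (Ψ : Matrix (Fin n) (Fin n) ℂ →ₗ[ℂ] Matrix (Fin n) (Fin n) ℂ)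
    (hCP : IsCP (⇑Ψ))
    (hsym : ∀ X Y : Matrix (Fin n) (Fin n) ℂ, (Ψ X * Y).trace = (X * Ψ Y).trace)
    (r : ℝ) (hr : 0 ≤ r)
    -- `r` is the spectral radius of `Ψ` : it is an eigenvalue (witnessed by `Ξ ≠ 0`)
    -- and it dominates the modulus of every eigenvalue.
    (hrad : ∀ (c : ℂ) (Y : Matrix (Fin n) (Fin n) ℂ), Y ≠ 0 → Ψ Y = c • Y → ‖c‖ ≤ r)
    -- `Ξ` is a PF eigenvector of maximal support:
    (Ξ : Matrix (Fin n) (Fin n) ℂ) (hΞpos : Ξ.PosSemidef) (hΞne : Ξ ≠ 0)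
    (hΞeig : Ψ Ξ = (r : ℂ) • Ξ)
    (hdom : ∀ X : Matrix (Fin n) (Fin n) ℂ, X.PosSemidef → Ψ X = (r : ℂ) • X →
      ∃ lam : ℝ, 0 < lam ∧ ((lam : ℂ) • Ξ - X).PosSemidef)
    -- `p` is the range projection of `Ξ`:
    (p : Matrix (Fin n) (Fin n) ℂ) (hph : pᴴ = p) (hpi : p * p = p)
    (hpker : ∀ v : Fin n → ℂ, p *ᵥ v = 0 ↔ Ξ *ᵥ v = 0) :
    ∀ X : Matrix (Fin n) (Fin n) ℂ, Ψ (X * p) = Ψ X * p ∧ Ψ (p * X) = p * Ψ X := by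
  classical
  set q : Matrix (Fin n) (Fin n) ℂ := 1 - p with hqdef
  have hqh : qᴴ = q := by simp [hqdef, hph]
  have hqi : q * q = q := by
    simp [hqdef, mul_sub, sub_mul, hpi]
  -- p * Ξ = Ξ
  have hpΞ : p * Ξ = Ξ := by
    have hcol : ∀ v, p *ᵥ (Ξ *ᵥ v) = Ξ *ᵥ v := by
      intro v
      set w : Fin n → ℂ := Ξ *ᵥ v - p *ᵥ (Ξ *ᵥ v) with hwdef
      have hpw : p *ᵥ w = 0 := by
        simp [hwdef, mulVec_sub, mulVec_mulVec, ← Matrix.mul_assoc, hpi]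
      have hΞw : Ξ *ᵥ w = 0 := (hpker w).mp hpw
      have hvmΞ : star w ᵥ* Ξ = 0 := by
        have : star (Ξ *ᵥ w) = star w ᵥ* Ξᴴ := star_mulVec Ξ w
        rw [hΞw, hΞpos.1] at this
        simpa using this.symm
      have hvmp : star w ᵥ* p = 0 := by
        have : star (p *ᵥ w) = star w ᵥ* pᴴ := star_mulVec p w
        rw [hpw, hph] at this
        simpa using this.symm
      have hw0 : star w ⬝ᵥ w = 0 := by
        have e1 : star w ⬝ᵥ (Ξ *ᵥ v) = 0 := by
          rw [dotProduct_mulVec, hvmΞ]; simp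
        have e2 : star w ⬝ᵥ (p *ᵥ (Ξ *ᵥ v)) = 0 := by
          rw [dotProduct_mulVec, hvmp]; simp
        calc star w ⬝ᵥ w = star w ⬝ᵥ (Ξ *ᵥ v) - star w ⬝ᵥ (p *ᵥ (Ξ *ᵥ v)) := by
              rw [hwdef, dotProduct_sub]
        _ = 0 := by rw [e1, e2, sub_zero]
      have hw : w = 0 := dotProduct_star_self_eq_zero.mp hw0
      rw [hwdef] at hw
      exact (sub_eq_zero.mp hw).symm
    have : p * Ξ - Ξ = 0 := auxExt fun v => by
      rw [sub_mulVec, ← mulVec_mulVec, hcol v, sub_self]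
    exact sub_eq_zero.mp this
  have hΞp : Ξ * p = Ξ := by
    have := congrArg conjTranspose hpΞ
    simpa [hph, hΞpos.1.eq] using this
  have hqΞ : q * Ξ = 0 := by
    simp [hqdef, sub_mul, hpΞ]
  have hΞq : Ξ * q = 0 := by
    simp [hqdef, mul_sub, hΞp]
  -- Ψ q and Ψ p are positive semidefinite
  have hΨq_psd : (Ψ q).PosSemidef := by
    have := psiPSD Ψ hCP q
    rwa [hqh, hqi] at this
  have hΨp_psd : (Ψ p).PosSemidef := by
    have := psiPSD Ψ hCP p
    rwa [hph, hpi] at this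
  -- Ψ q is supported away from p
  have htr1 : (Ψ q * Ξ).trace = 0 := by
    rw [hsym q Ξ, hΞeig, mul_smul_comm, trace_smul, hqΞ]
    simp
  have hΨqΞ : Ψ q * Ξ = 0 := auxMulTraceZero hΨq_psd hΞpos htr1
  have hΞΨq : Ξ * Ψ q = 0 := by
    have := congrArg conjTranspose hΨqΞ
    simpa [hΞpos.1.eq, hΨq_psd.1.eq] using this
  have hpΨq : p * Ψ q = 0 := by
    apply auxExt
    intro v
    rw [← mulVec_mulVec]
    apply (hpker _).mpr
    rw [mulVec_mulVec, hΞΨq]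
    simp
  have hΨqp : Ψ q * p = 0 := by
    have := congrArg conjTranspose hpΨq
    simpa [hph, hΨq_psd.1.eq] using this
  -- Ψ p is supported in p
  have htr2 : (q * Ψ p * q).trace = 0 := by
    rw [Matrix.trace_mul_cycle, hqi, Matrix.trace_mul_comm, hsym p q, hpΨq]
    simp
  have hqΨpq : q * Ψ p * q = 0 :=
    auxPSDTraceZero (by simpa [hqh] using hΨp_psd.mul_mul_conjTranspose_same q) htr2
  have hΨpq : Ψ p * q = 0 := (auxCancel hΨp_psd hqh hqΨpq).1
  -- corner lemmas
  have cs_p : ∀ (B : Matrix (Fin n) (Fin n) ℂ) (u : Fin n → ℂ),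
      Ψ (Bᴴ * p) *ᵥ (q *ᵥ u) = 0 := by
    intro B u
    apply psiCS Ψ hCP p B
    rw [show Ψ (pᴴ * p) = Ψ p by rw [hph, hpi], mulVec_mulVec, hΨpq, zero_mulVec]
  have cs_q : ∀ (B : Matrix (Fin n) (Fin n) ℂ) (u : Fin n → ℂ),
      Ψ (Bᴴ * q) *ᵥ (p *ᵥ u) = 0 := by
    intro B u
    apply psiCS Ψ hCP q B
    rw [show Ψ (qᴴ * q) = Ψ q by rw [hqh, hqi], mulVec_mulVec, hΨqp, zero_mulVec]
  -- right-multiplication corner identities (for all X)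
  have c1 : ∀ X : Matrix (Fin n) (Fin n) ℂ, Ψ (p * X * p) * q = 0 := by
    intro X
    apply auxExt
    intro v
    rw [← mulVec_mulVec]
    have := cs_p (Xᴴ * p) v
    rwa [conjTranspose_mul, conjTranspose_conjTranspose, hph] at this
  have c2 : ∀ X : Matrix (Fin n) (Fin n) ℂ, Ψ (q * X * q) * p = 0 := by
    intro X
    apply auxExt
    intro v
    rw [← mulVec_mulVec]
    have := cs_q (Xᴴ * q) v
    rwa [conjTranspose_mul, conjTranspose_conjTranspose, hqh] at this
  have c3 : ∀ X : Matrix (Fin n) (Fin n) ℂ, Ψ (p * X * q) * p = 0 := by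
    intro X
    apply auxExt
    intro v
    rw [← mulVec_mulVec]
    have := cs_q (Xᴴ * p) v
    rwa [conjTranspose_mul, conjTranspose_conjTranspose, hph] at this
  have c4 : ∀ X : Matrix (Fin n) (Fin n) ℂ, Ψ (q * X * p) * q = 0 := by
    intro X
    apply auxExt
    intro v
    rw [← mulVec_mulVec]
    have := cs_p (Xᴴ * q) v
    rwa [conjTranspose_mul, conjTranspose_conjTranspose, hqh] at this
  -- left-multiplication corner identities via the adjoint property
  have hadj : ∀ M : Matrix (Fin n) (Fin n) ℂ, Ψ Mᴴ = (Ψ M)ᴴ := psiAdj Ψ hCP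
  have ct : ∀ (a Y : Matrix (Fin n) (Fin n) ℂ), aᴴ = a → Ψ Yᴴ * a = 0 → a * Ψ Y = 0 := by
    intro a Y ha h
    rw [hadj] at h
    have := congrArg conjTranspose h
    simpa [ha, conjTranspose_mul] using this
  have d1 : ∀ X : Matrix (Fin n) (Fin n) ℂ, q * Ψ (p * X * p) = 0 := by
    intro X
    refine ct q (p * X * p) hqh ?_
    rw [show (p * X * p)ᴴ = p * Xᴴ * p by
      rw [conjTranspose_mul, conjTranspose_mul, hph, Matrix.mul_assoc]]
    exact c1 Xᴴ
  have d2 : ∀ X : Matrix (Fin n) (Fin n) ℂ, p * Ψ (q * X * q) = 0 := by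
    intro X
    refine ct p (q * X * q) hph ?_
    rw [show (q * X * q)ᴴ = q * Xᴴ * q by
      rw [conjTranspose_mul, conjTranspose_mul, hqh, Matrix.mul_assoc]]
    exact c2 Xᴴ
  have d3 : ∀ X : Matrix (Fin n) (Fin n) ℂ, q * Ψ (p * X * q) = 0 := by
    intro X
    refine ct q (p * X * q) hqh ?_
    rw [show (p * X * q)ᴴ = q * Xᴴ * p by
      rw [conjTranspose_mul, conjTranspose_mul, hqh, hph, Matrix.mul_assoc]]
    exact c4 Xᴴ
  have d4 : ∀ X : Matrix (Fin n) (Fin n) ℂ, p * Ψ (q * X * p) = 0 := by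
    intro X
    refine ct p (q * X * p) hph ?_
    rw [show (q * X * p)ᴴ = p * Xᴴ * q by
      rw [conjTranspose_mul, conjTranspose_mul, hqh, hph, Matrix.mul_assoc]]
    exact c3 Xᴴ
  -- assembly
  have hp1q : p = 1 - q := by rw [hqdef]; exact (sub_sub_cancel 1 p).symm
  have hrp : ∀ M : Matrix (Fin n) (Fin n) ℂ, M * q = 0 → M * p = M := by
    intro M h
    rw [hp1q, mul_sub, mul_one, h, sub_zero]
  have hlp : ∀ M : Matrix (Fin n) (Fin n) ℂ, q * M = 0 → p * M = M := by
    intro M h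
    rw [hp1q, sub_mul, one_mul, h, sub_zero]
  intro X
  have e2 : Ψ X = Ψ (p * X * p) + Ψ (p * X * q) + Ψ (q * X * p) + Ψ (q * X * q) := by
    rw [← map_add, ← map_add, ← map_add]
    congr 1
    rw [hqdef]
    noncomm_ring
  constructor
  · have e1 : Ψ (X * p) = Ψ (p * X * p) + Ψ (q * X * p) := by
      rw [← map_add]
      congr 1
      rw [hqdef]
      noncomm_ring
    rw [e1, e2, add_mul, add_mul, add_mul, hrp _ (c1 X), hrp _ (c4 X), c3 X, c2 X]
    abel
  · have e1 : Ψ (p * X) = Ψ (p * X * p) + Ψ (p * X * q) := by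
      rw [← map_add]
      congr 1
      rw [hqdef]
      noncomm_ring
    rw [e1, e2, mul_add, mul_add, mul_add, hlp _ (d1 X), hlp _ (d3 X), d4 X, d2 X]
    abel
end

section
/- Let Ψ be a symmetric completely positive map on B(H), X a self-adjoint operator with Ψ(X) = ρ(Ψ)X where ρ(Ψ) is the spectral radius. Then Ψ(|X|) = ρ(Ψ)|X|, and the positive and negative parts X_+ and X_- of X are each eigenvectors of Ψ with eigenvalue ρ(Ψ). -/
open Matrix BigOperators
open scoped ComplexOrder

lemma isCP_pos {n : ℕ} {Φ : Matrix (Fin n) (Fin n) ℂ → Matrix (Fin n) (Fin n) ℂ}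
    (hΦ : IsCP Φ) {A : Matrix (Fin n) (Fin n) ℂ} (hA : A.PosSemidef) : (Φ A).PosSemidef := by
  have hM : (A.submatrix (Prod.fst : Fin n × Fin 1 → Fin n) Prod.fst).PosSemidef :=
    hA.submatrix _
  have h := hΦ 1 _ hM
  have key : Φ A = (tensorAmp 1 Φ (A.submatrix Prod.fst Prod.fst)).submatrix
      (fun i => (i, (0 : Fin 1))) (fun i => (i, (0 : Fin 1))) := rfl
  rw [key]
  exact h.submatrix _

lemma trace_psd_nonneg {n : ℕ} {A : Matrix (Fin n) (Fin n) ℂ} (hA : A.PosSemidef) :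
    0 ≤ A.trace := by
  refine Finset.sum_nonneg fun i _ => ?_
  have := hA.dotProduct_mulVec_nonneg (Pi.single i 1)
  simpa [dotProduct, Pi.single_apply, Matrix.mulVec] using this

lemma trace_mul_psd_nonneg {n : ℕ} {A B : Matrix (Fin n) (Fin n) ℂ}
    (hA : A.PosSemidef) (hB : B.PosSemidef) : 0 ≤ (A * B).trace := by
  obtain ⟨C, rfl⟩ : ∃ C : Matrix (Fin n) (Fin n) ℂ, B = Cᴴ * C := by
    open scoped MatrixOrder Matrix.Norms.L2Operator in
    exact CStarAlgebra.nonneg_iff_eq_star_mul_self.mp hB.nonneg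
  rw [← Matrix.mul_assoc, Matrix.trace_mul_cycle]
  exact trace_psd_nonneg (hA.mul_mul_conjTranspose_same C)

lemma herm_sub_psd {n : ℕ} {A : Matrix (Fin n) (Fin n) ℂ} (hA : A.IsHermitian) :
    ∃ P Q : Matrix (Fin n) (Fin n) ℂ, P.PosSemidef ∧ Q.PosSemidef ∧ A = P - Q := by
  classical
  set U : Matrix (Fin n) (Fin n) ℂ := (hA.eigenvectorUnitary : Matrix (Fin n) (Fin n) ℂ) with hU
  set dp : Fin n → ℂ := fun i => ((max (hA.eigenvalues i) 0 : ℝ) : ℂ)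
  set dm : Fin n → ℂ := fun i => ((max (-hA.eigenvalues i) 0 : ℝ) : ℂ)
  have hdp : 0 ≤ dp := fun i => by
    simp [dp, Complex.zero_le_real, le_max_right]
  have hdm : 0 ≤ dm := fun i => by
    simp [dm, Complex.zero_le_real, le_max_right]
  refine ⟨U * Matrix.diagonal dp * Uᴴ, U * Matrix.diagonal dm * Uᴴ,
    (Matrix.PosSemidef.diagonal hdp).mul_mul_conjTranspose_same U,
    (Matrix.PosSemidef.diagonal hdm).mul_mul_conjTranspose_same U, ?_⟩
  have hfun : (dp - dm) = (RCLike.ofReal ∘ hA.eigenvalues) := by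
    funext i
    simp only [Pi.sub_apply, dp, dm, Function.comp_apply]
    rw [← Complex.ofReal_sub, max_zero_sub_max_neg_zero_eq_self]
    rfl
  have hd : Matrix.diagonal dp - Matrix.diagonal dm
      = Matrix.diagonal (RCLike.ofReal ∘ hA.eigenvalues) := by
    rw [Matrix.diagonal_sub,
      show (fun i => dp i - dm i) = (RCLike.ofReal ∘ hA.eigenvalues) from hfun]
  calc A = U * Matrix.diagonal (RCLike.ofReal ∘ hA.eigenvalues) * Uᴴ := by
        simpa [Matrix.star_eq_conjTranspose] using hA.spectral_theorem
    _ = U * Matrix.diagonal dp * Uᴴ - U * Matrix.diagonal dm * Uᴴ := by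
        rw [← hd]
        noncomm_ring

lemma herm_map {n : ℕ} (Ψ : Matrix (Fin n) (Fin n) ℂ →ₗ[ℂ] Matrix (Fin n) (Fin n) ℂ)
    (hpos : ∀ A, A.PosSemidef → (Ψ A).PosSemidef)
    {H : Matrix (Fin n) (Fin n) ℂ} (hH : H.IsHermitian) : (Ψ H).IsHermitian := by
  obtain ⟨P, Q, hP, hQ, hPQ⟩ := herm_sub_psd hH
  rw [hPQ, map_sub]
  exact ((hpos _ hP).isHermitian).sub ((hpos _ hQ).isHermitian)

lemma star_map {n : ℕ} (Ψ : Matrix (Fin n) (Fin n) ℂ →ₗ[ℂ] Matrix (Fin n) (Fin n) ℂ)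
    (hpos : ∀ A, A.PosSemidef → (Ψ A).PosSemidef)
    (A : Matrix (Fin n) (Fin n) ℂ) : Ψ Aᴴ = (Ψ A)ᴴ := by
  obtain ⟨H, hHdef⟩ : ∃ H : Matrix (Fin n) (Fin n) ℂ, H = (2⁻¹ : ℂ) • (A + Aᴴ) := ⟨_, rfl⟩
  obtain ⟨K, hKdef⟩ : ∃ K : Matrix (Fin n) (Fin n) ℂ, K = (Complex.I/2) • (Aᴴ - A) := ⟨_, rfl⟩
  have hH : H.IsHermitian := by
    rw [Matrix.IsHermitian, hHdef, Matrix.conjTranspose_smul, Matrix.conjTranspose_add,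
      Matrix.conjTranspose_conjTranspose]
    have : star (2⁻¹ : ℂ) = (2⁻¹ : ℂ) := by simp
    rw [this, add_comm]
  have hK : K.IsHermitian := by
    rw [Matrix.IsHermitian, hKdef, Matrix.conjTranspose_smul, Matrix.conjTranspose_sub,
      Matrix.conjTranspose_conjTranspose]
    have : star (Complex.I/2 : ℂ) = -(Complex.I/2) := by
      simp [Complex.ext_iff]
      norm_num
    rw [this, neg_smul, ← smul_neg, neg_sub]
  have hmul : Complex.I * (Complex.I/2) = -(2⁻¹ : ℂ) := by
    rw [mul_div_assoc', Complex.I_mul_I]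
    norm_num
  have hA1 : A = H + Complex.I • K := by
    rw [hHdef, hKdef, smul_smul, hmul]
    module
  have hA2 : Aᴴ = H - Complex.I • K := by
    rw [hHdef, hKdef, smul_smul, hmul]
    module
  rw [hA2, map_sub, _root_.map_smul]
  conv_rhs => rw [hA1]
  rw [map_add, _root_.map_smul, Matrix.conjTranspose_add, Matrix.conjTranspose_smul,
    (herm_map Ψ hpos hH).eq, (herm_map Ψ hpos hK).eq, Complex.star_def, Complex.conj_I,
    neg_smul, ← sub_eq_add_neg]

noncomputable def mE (n : ℕ) :
    Matrix (Fin n) (Fin n) ℂ ≃ₗ[ℂ] EuclideanSpace ℂ (Fin n × Fin n) where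
  toFun A := WithLp.toLp 2 (fun p : Fin n × Fin n => A p.1 p.2)
  map_add' _ _ := rfl
  map_smul' _ _ := rfl
  invFun x := Matrix.of fun i j => x (i, j)
  left_inv _ := rfl
  right_inv _ := rfl

lemma inner_mE {n : ℕ} (A B : Matrix (Fin n) (Fin n) ℂ) :
    (inner ℂ (mE n A) (mE n B) : ℂ) = (Aᴴ * B).trace := by
  simp only [PiLp.inner_apply, RCLike.inner_apply, Matrix.trace, Matrix.diag_apply,
    Matrix.mul_apply, Matrix.conjTranspose_apply, mE, LinearEquiv.coe_mk]
  rw [← Finset.sum_product']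
  rw [show (Finset.univ ×ˢ Finset.univ : Finset (Fin n × Fin n)) = Finset.univ from rfl]
  exact Finset.sum_equiv (Equiv.prodComm _ _) (by simp) (fun a _ => mul_comm _ _)

lemma eig_gap {E : Type*} [NormedAddCommGroup E] [InnerProductSpace ℂ E]
    [FiniteDimensional ℂ E]
    {T : E →ₗ[ℂ] E} (hT : T.IsSymmetric) {r : ℝ}
    (hbound : ∀ (c : ℂ) (y : E), y ≠ 0 → T y = c • y → c.re ≤ r)
    {z : E} (hkey : r * (‖z‖^2 : ℝ) ≤ (inner ℂ z (T z) : ℂ).re) :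
    T z = (r : ℂ) • z := by
  have hn : Module.finrank ℂ E = Module.finrank ℂ E := rfl
  set N := Module.finrank ℂ E with hN
  let b := hT.eigenvectorBasis hn
  let μ := hT.eigenvalues hn
  have heigen : ∀ i, T (b i) = (μ i : ℂ) • b i := fun i => hT.apply_eigenvectorBasis hn i
  have hμr : ∀ i, μ i ≤ r := fun i => by
    have hb0 : b i ≠ 0 := by
      simpa using b.toBasis.ne_zero i
    simpa using hbound (μ i) (b i) hb0 (heigen i)
  set c : Fin N → ℂ := fun i => b.repr z i with hc
  have hrepr_T : ∀ i, b.repr (T z) i = (μ i : ℂ) * c i := fun i => by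
    rw [b.repr_apply_apply, ← hT (b i) z, heigen i, inner_smul_left, Complex.conj_ofReal,
      ← b.repr_apply_apply]
  have hinner : (inner ℂ z (T z) : ℂ) = ∑ i, (starRingEnd ℂ) (c i) * ((μ i : ℂ) * c i) := by
    rw [← b.repr.inner_map_map z (T z)]
    simp only [PiLp.inner_apply, RCLike.inner_apply]
    exact Finset.sum_congr rfl fun i _ => by rw [hrepr_T i]; ring
  have hconj : ∀ i, (starRingEnd ℂ) (c i) * ((μ i : ℂ) * c i)
      = ((μ i * Complex.normSq (c i) : ℝ) : ℂ) := fun i => by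
    push_cast
    rw [show ((Complex.normSq (c i) : ℝ) : ℂ) = (starRingEnd ℂ) (c i) * c i from
      Complex.normSq_eq_conj_mul_self]
    ring
  have h1 : (inner ℂ z (T z) : ℂ).re = ∑ i, μ i * Complex.normSq (c i) := by
    rw [hinner]
    simp only [hconj]
    rw [← Complex.ofReal_sum]
    exact Complex.ofReal_re _
  have h2 : (‖z‖^2 : ℝ) = ∑ i, Complex.normSq (c i) := by
    have h0 : (inner ℂ z z : ℂ) = ∑ i, (starRingEnd ℂ) (c i) * c i := by
      rw [← b.repr.inner_map_map z z]
      simp only [PiLp.inner_apply, RCLike.inner_apply]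
      exact Finset.sum_congr rfl fun i _ => mul_comm _ _
    have h3 : (inner ℂ z z : ℂ).re = ∑ i, Complex.normSq (c i) := by
      rw [h0]
      simp only [← Complex.normSq_eq_conj_mul_self]
      rw [show (∑ i, (Complex.normSq (c i) : ℂ)) = ((∑ i, Complex.normSq (c i) : ℝ) : ℂ) by
        push_cast; ring]
      exact Complex.ofReal_re _
    rw [← h3, ← RCLike.re_eq_complex_re, @inner_self_eq_norm_sq ℂ]
  have hsum : ∑ i, (r - μ i) * Complex.normSq (c i) = 0 := by
    have hle : ∑ i, (r - μ i) * Complex.normSq (c i) ≤ 0 := by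
      have heq : ∑ i, (r - μ i) * Complex.normSq (c i)
          = r * (‖z‖^2 : ℝ) - (inner ℂ z (T z) : ℂ).re := by
        rw [h1, h2, Finset.mul_sum, ← Finset.sum_sub_distrib]
        exact Finset.sum_congr rfl fun i _ => by ring
      rw [heq]
      linarith [hkey]
    have hge : 0 ≤ ∑ i, (r - μ i) * Complex.normSq (c i) :=
      Finset.sum_nonneg fun i _ =>
        mul_nonneg (by linarith [hμr i]) (Complex.normSq_nonneg _)
    linarith
  have hterm : ∀ i ∈ Finset.univ, (r - μ i) * Complex.normSq (c i) = 0 :=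
    (Finset.sum_eq_zero_iff_of_nonneg fun i _ =>
      mul_nonneg (by linarith [hμr i]) (Complex.normSq_nonneg _)).mp hsum
  apply b.repr.injective
  ext i
  rw [hrepr_T i]
  have hsm : b.repr ((r : ℂ) • z) i = (r : ℂ) * c i := by
    rw [_root_.map_smul]
    rfl
  rw [hsm]
  rcases mul_eq_zero.mp (hterm i (Finset.mem_univ i)) with h | h
  · have : μ i = r := by linarith [sub_eq_zero.mp h]
    rw [this]
  · rw [Complex.normSq_eq_zero.mp h, mul_zero, mul_zero]

/-- If `Ψ` is symmetric completely positive and `X = P − Q` is a self-adjoint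
eigenvector at the spectral radius `r` (with `P, Q ≥ 0`, `PQ = QP = 0`), then
`|X| = P + Q` is an eigenvector at `r`, and so are the positive and negative parts
`P` and `Q`. -/
theorem abs_eigenvector_at_spectral_radius {n : ℕ}
    (Ψ : Matrix (Fin n) (Fin n) ℂ →ₗ[ℂ] Matrix (Fin n) (Fin n) ℂ)
    (hCP : IsCP (⇑Ψ))
    (hsym : ∀ X Y : Matrix (Fin n) (Fin n) ℂ, (Ψ X * Y).trace = (X * Ψ Y).trace)
    (r : ℝ) (hr : 0 ≤ r)
    -- `r` is the spectral radius: it dominates the modulus of every eigenvalue of `Ψ`.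
    (hrad : ∀ (c : ℂ) (Y : Matrix (Fin n) (Fin n) ℂ), Y ≠ 0 → Ψ Y = c • Y → ‖c‖ ≤ r)
    (X P Q : Matrix (Fin n) (Fin n) ℂ)
    (hX : X = P - Q) (hP : P.PosSemidef) (hQ : Q.PosSemidef)
    (hPQ : P * Q = 0) (hQP : Q * P = 0)
    (heig : Ψ X = (r : ℂ) • X) :
    Ψ (P + Q) = (r : ℂ) • (P + Q) ∧ Ψ P = (r : ℂ) • P ∧ Ψ Q = (r : ℂ) • Q := by
  have hpos : ∀ A, A.PosSemidef → (Ψ A).PosSemidef := fun A hA => isCP_pos hCP hA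
  have hstar : ∀ A, Ψ Aᴴ = (Ψ A)ᴴ := star_map Ψ hpos
  set T : EuclideanSpace ℂ (Fin n × Fin n) →ₗ[ℂ] EuclideanSpace ℂ (Fin n × Fin n) :=
    (mE n).toLinearMap ∘ₗ Ψ ∘ₗ (mE n).symm.toLinearMap with hT
  have hTapp : ∀ A, T (mE n A) = mE n (Ψ A) := fun A => by
    simp [hT]
  have hTsym : T.IsSymmetric := by
    intro x y
    obtain ⟨A, rfl⟩ : ∃ A, x = mE n A := ⟨(mE n).symm x, ((mE n).apply_symm_apply x).symm⟩
    obtain ⟨B, rfl⟩ : ∃ B, y = mE n B := ⟨(mE n).symm y, ((mE n).apply_symm_apply y).symm⟩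
    rw [hTapp, hTapp, inner_mE, inner_mE, ← hstar, hsym]
  have hbound : ∀ (c : ℂ) (y : EuclideanSpace ℂ (Fin n × Fin n)),
      y ≠ 0 → T y = c • y → c.re ≤ r := by
    intro c y hy hTy
    obtain ⟨A, rfl⟩ : ∃ A, y = mE n A := ⟨(mE n).symm y, ((mE n).apply_symm_apply y).symm⟩
    rw [hTapp] at hTy
    have hA0 : A ≠ 0 := fun h => hy (by rw [h, map_zero])
    have hΨA : Ψ A = c • A := by
      apply (mE n).injective
      rw [hTy, _root_.map_smul]
    calc c.re ≤ ‖c‖ := by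
          exact Complex.re_le_norm c
      _ ≤ r := hrad c A hA0 hΨA
  set Z : Matrix (Fin n) (Fin n) ℂ := P + Q with hZ
  have hZher : Z.IsHermitian := hP.isHermitian.add hQ.isHermitian
  have hXher : X.IsHermitian := by
    rw [hX]; exact hP.isHermitian.sub hQ.isHermitian
  -- trace identities
  have htr1 : (Z * Ψ Z).trace
      = (X * Ψ X).trace + 2*(P * Ψ Q).trace + 2*(Q * Ψ P).trace := by
    rw [hX, hZ]
    simp only [map_add, map_sub, mul_add, add_mul, mul_sub, sub_mul,
      Matrix.trace_add, Matrix.trace_sub]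
    ring
  have htr2 : (X * Ψ X).trace = (r : ℂ) * (X * X).trace := by
    rw [heig, Matrix.mul_smul, Matrix.trace_smul]
    rfl
  have htr3 : (X * X).trace = (Z * Z).trace := by
    rw [hX, hZ]
    simp only [mul_add, add_mul, mul_sub, sub_mul, hPQ, hQP,
      Matrix.trace_add, Matrix.trace_sub, Matrix.trace_zero]
    ring
  have hpsd1 : 0 ≤ (P * Ψ Q).trace := trace_mul_psd_nonneg hP (hpos _ hQ)
  have hpsd2 : 0 ≤ (Q * Ψ P).trace := trace_mul_psd_nonneg hQ (hpos _ hP)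
  have hre1 : 0 ≤ (P * Ψ Q).trace.re := by
    have := (Complex.le_def.mp hpsd1).1
    simpa using this
  have hre2 : 0 ≤ (Q * Ψ P).trace.re := by
    have := (Complex.le_def.mp hpsd2).1
    simpa using this
  set z : EuclideanSpace ℂ (Fin n × Fin n) := mE n Z with hz
  have hinner_zz : (inner ℂ z z : ℂ) = (Z * Z).trace := by
    rw [hz, inner_mE, hZher.eq]
  have hinner_zTz : (inner ℂ z (T z) : ℂ) = (Z * Ψ Z).trace := by
    rw [hz, hTapp, inner_mE, hZher.eq]
  have hnorm : (‖z‖^2 : ℝ) = (Z * Z).trace.re := by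
    rw [← hinner_zz, ← RCLike.re_eq_complex_re, @inner_self_eq_norm_sq ℂ]
  have hkey : r * (‖z‖^2 : ℝ) ≤ (inner ℂ z (T z) : ℂ).re := by
    rw [hinner_zTz, htr1, htr2, htr3, hnorm]
    simp only [Complex.add_re, Complex.mul_re, Complex.ofReal_re, Complex.ofReal_im,
      Complex.re_ofNat, Complex.im_ofNat]
    nlinarith [hre1, hre2]
  have hTz := eig_gap hTsym hbound hkey
  have hZeig : Ψ Z = (r : ℂ) • Z := by
    apply (mE n).injective
    rw [← hTapp, hTz, _root_.map_smul]
  refine ⟨hZeig, ?_, ?_⟩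
  · have hPeq : P = (2⁻¹ : ℂ) • (Z + X) := by
      rw [hZ, hX]; module
    rw [hPeq, _root_.map_smul, map_add, hZeig, heig]
    module
  · have hQeq : Q = (2⁻¹ : ℂ) • (Z - X) := by
      rw [hZ, hX]; module
    rw [hQeq, _root_.map_smul, map_sub, hZeig, heig]
    module
end

section
/- Let Ψ be a symmetric completely positive map on B(H) with PF eigenvector Ξ of maximal support p_max. Let Ψ_0(X) = Ψ(p_max X p_max) be the truncated map. Then the eigenspace of Ψ at eigenvalue ρ(Ψ) coincides with the eigenspace of Ψ_0 at eigenvalue ρ(Ψ_0) = ρ(Ψ); in particular every eigenvector X of Ψ with eigenvalue ρ(Ψ) satisfies X = p_max X p_max. -/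
open Matrix BigOperators
open scoped ComplexOrder

namespace PFaux
variable {n : ℕ}

/-! ### A poor man's functional calculus for hermitian matrices -/

noncomputable def hfun {A : Matrix (Fin n) (Fin n) ℂ} (hA : A.IsHermitian) (f : ℝ → ℝ) :
    Matrix (Fin n) (Fin n) ℂ :=
  (hA.eigenvectorUnitary : Matrix (Fin n) (Fin n) ℂ) *
    diagonal (fun i => (f (hA.eigenvalues i) : ℂ)) *
    star (hA.eigenvectorUnitary : Matrix (Fin n) (Fin n) ℂ)

variable {A : Matrix (Fin n) (Fin n) ℂ} (hA : A.IsHermitian) (f g : ℝ → ℝ)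

lemma hfun_conjTranspose : (hfun hA f)ᴴ = hfun hA f := by
  simp [hfun, star_eq_conjTranspose, conjTranspose_mul, diagonal_conjTranspose,
    Pi.star_def, Complex.conj_ofReal, mul_assoc]

lemma hfun_mul : hfun hA f * hfun hA g = hfun hA (fun x => f x * g x) := by
  have h1 : (star (hA.eigenvectorUnitary : Matrix (Fin n) (Fin n) ℂ)) *
      (hA.eigenvectorUnitary : Matrix (Fin n) (Fin n) ℂ) = 1 :=
    Unitary.coe_star_mul_self _
  simp only [hfun, mul_assoc]
  rw [← mul_assoc (star (hA.eigenvectorUnitary : Matrix (Fin n) (Fin n) ℂ))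
    (hA.eigenvectorUnitary : Matrix (Fin n) (Fin n) ℂ), h1, one_mul,
    ← mul_assoc (diagonal _) (diagonal _), diagonal_mul_diagonal]
  congr 2
  funext i
  push_cast
  ring

lemma hfun_sub : hfun hA f - hfun hA g = hfun hA (fun x => f x - g x) := by
  simp only [hfun, ← sub_mul, ← mul_sub, diagonal_sub]
  congr 2
  exact congrArg diagonal (funext fun k => by push_cast [Pi.sub_apply]; ring)

lemma hfun_add : hfun hA f + hfun hA g = hfun hA (fun x => f x + g x) := by
  simp only [hfun, ← add_mul, ← mul_add, diagonal_add]
  congr 2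
  exact congrArg diagonal (funext fun k => by push_cast [Pi.add_apply]; ring)

lemma hfun_smul (c : ℝ) : (c : ℂ) • hfun hA f = hfun hA (fun x => c * f x) := by
  unfold hfun
  rw [show (fun i => ((c * f (hA.eigenvalues i) : ℝ) : ℂ))
      = (c : ℂ) • (fun i => ((f (hA.eigenvalues i) : ℝ) : ℂ)) from funext fun i => by
        push_cast [Pi.smul_apply, smul_eq_mul]; ring,
    diagonal_smul, Matrix.mul_smul, Matrix.smul_mul]

lemma hfun_id : hfun hA id = A := by
  simpa [hfun, Function.comp_def] using hA.spectral_theorem.symm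

lemma hfun_id' : hfun hA (fun x => x) = A := hfun_id hA

lemma hfun_congr (h : ∀ i, f (hA.eigenvalues i) = g (hA.eigenvalues i)) :
    hfun hA f = hfun hA g := by
  unfold hfun
  congr 2
  exact congrArg diagonal (funext fun k => by rw [h k])

lemma hfun_posSemidef (h : ∀ i, 0 ≤ f (hA.eigenvalues i)) : (hfun hA f).PosSemidef := by
  have hd : (diagonal (fun i => (f (hA.eigenvalues i) : ℂ))).PosSemidef :=
    Matrix.posSemidef_diagonal_iff.2 fun i => by
      rw [Complex.zero_le_real]; exact h i
  simpa [hfun, star_eq_conjTranspose] using hd.mul_mul_conjTranspose_same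
    (hA.eigenvectorUnitary : Matrix (Fin n) (Fin n) ℂ)

lemma hfun_one : hfun hA (fun _ => 1) = 1 := by
  simp only [hfun, Complex.ofReal_one, diagonal_one, mul_one]
  exact (Matrix.mem_unitaryGroup_iff).mp (hA.eigenvectorUnitary).2

lemma hfun_zero : hfun hA (fun _ => 0) = 0 := by
  simp [hfun]

lemma hfun_mulVec_eq_zero_iff (v : Fin n → ℂ) :
    hfun hA f *ᵥ v = 0 ↔ ∀ i, (f (hA.eigenvalues i) : ℂ) *
      ((star (hA.eigenvectorUnitary : Matrix (Fin n) (Fin n) ℂ)) *ᵥ v) i = 0 := by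
  have h1 : (star (hA.eigenvectorUnitary : Matrix (Fin n) (Fin n) ℂ)) *
      (hA.eigenvectorUnitary : Matrix (Fin n) (Fin n) ℂ) = 1 :=
    Unitary.coe_star_mul_self _
  constructor
  · intro h i
    have := congrArg (fun w => (star (hA.eigenvectorUnitary : Matrix (Fin n) (Fin n) ℂ)) *ᵥ w) h
    simp only [mulVec_zero] at this
    rw [hfun, ← mulVec_mulVec, ← mulVec_mulVec, mulVec_mulVec, h1, one_mulVec] at this
    have := congrFun this i
    simpa [diagonal_mulVec_single, mulVec, diagonal, dotProduct] using this
  · intro h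
    have hd : diagonal (fun i => (f (hA.eigenvalues i) : ℂ)) *ᵥ
        ((star (hA.eigenvectorUnitary : Matrix (Fin n) (Fin n) ℂ)) *ᵥ v) = 0 := by
      funext i
      simpa [mulVec_diagonal] using h i
    rw [hfun, ← mulVec_mulVec, ← mulVec_mulVec, hd, mulVec_zero]

/-! ### Misc positive semidefinite facts -/

lemma eq_zero_of_mulVec_eq_zero {A : Matrix (Fin n) (Fin n) ℂ}
    (h : ∀ v, A *ᵥ v = 0) : A = 0 := by
  ext i j
  have := congrFun (h (Pi.single j 1)) i
  simpa [mulVec_single] using this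

lemma trace_nonneg_of_posSemidef {P : Matrix (Fin n) (Fin n) ℂ} (hP : P.PosSemidef) :
    0 ≤ P.trace := by
  rw [Matrix.trace]
  apply Finset.sum_nonneg
  intro i _
  simpa [dotProduct, mulVec_single, Pi.single_apply, Finset.sum_ite_eq'] using hP.dotProduct_mulVec_nonneg (Pi.single i 1)

lemma trace_mul_nonneg {A B : Matrix (Fin n) (Fin n) ℂ}
    (hA : A.PosSemidef) (hB : B.PosSemidef) : 0 ≤ (A * B).trace := by
  have hS : (hfun hA.1 (fun x => Real.sqrt x))ᴴ = hfun hA.1 (fun x => Real.sqrt x) :=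
    hfun_conjTranspose hA.1 _
  have hSS : hfun hA.1 (fun x => Real.sqrt x) * hfun hA.1 (fun x => Real.sqrt x) = A := by
    rw [hfun_mul]
    conv_rhs => rw [← hfun_id' hA.1]
    exact hfun_congr hA.1 _ _ fun i => Real.mul_self_sqrt (hA.eigenvalues_nonneg i)
  have h2 : (hfun hA.1 (fun x => Real.sqrt x) * B * hfun hA.1 (fun x => Real.sqrt x)).trace
      = (A * B).trace := by
    rw [Matrix.mul_assoc, Matrix.trace_mul_comm, Matrix.mul_assoc, hSS,
      Matrix.trace_mul_comm]
  rw [← h2]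
  have h3 : (hfun hA.1 (fun x => Real.sqrt x) * B * hfun hA.1 (fun x => Real.sqrt x)).PosSemidef := by
    have := hB.mul_mul_conjTranspose_same (hfun hA.1 (fun x => Real.sqrt x))
    rwa [hS] at this
  exact trace_nonneg_of_posSemidef h3

lemma trace_mul_re_nonneg {A B : Matrix (Fin n) (Fin n) ℂ}
    (hA : A.PosSemidef) (hB : B.PosSemidef) : 0 ≤ ((A * B).trace).re :=
  (Complex.le_def.mp (trace_mul_nonneg hA hB)).1

lemma smul_posSemidef {A : Matrix (Fin n) (Fin n) ℂ} (hA : A.PosSemidef)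
    {c : ℝ} (hc : 0 ≤ c) : ((c : ℂ) • A).PosSemidef := by
  refine posSemidef_iff_dotProduct_mulVec.mpr ⟨?_, ?_⟩
  · rw [Matrix.IsHermitian, conjTranspose_smul, hA.1.eq]
    congr 1
    simp [Complex.conj_ofReal]
  · intro x
    rw [smul_mulVec, dotProduct_smul]
    exact smul_nonneg (by exact_mod_cast Complex.zero_le_real.mpr hc) (hA.dotProduct_mulVec_nonneg x)

lemma mulVec_eq_zero_of_dom {Z W : Matrix (Fin n) (Fin n) ℂ}
    (hZ : Z.PosSemidef) (hWZ : (W - Z).PosSemidef) {v : Fin n → ℂ}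
    (hv : W *ᵥ v = 0) : Z *ᵥ v = 0 := by
  have h1 : 0 ≤ star v ⬝ᵥ ((W - Z) *ᵥ v) := hWZ.dotProduct_mulVec_nonneg v
  rw [sub_mulVec, hv, zero_sub, dotProduct_neg] at h1
  have h2 : 0 ≤ star v ⬝ᵥ (Z *ᵥ v) := hZ.dotProduct_mulVec_nonneg v
  have h3 : star v ⬝ᵥ (Z *ᵥ v) = 0 :=
    le_antisymm (by simpa using neg_nonneg.mp (by simpa using h1)) h2
  exact (hZ.dotProduct_mulVec_zero_iff v).mp h3

lemma herm_supp {p H : Matrix (Fin n) (Fin n) ℂ} (hph : pᴴ = p) (hpi : p * p = p)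
    (hH : Hᴴ = H) (hker : ∀ v, p *ᵥ v = 0 → H *ᵥ v = 0) : p * H * p = H := by
  have h1 : H * p = H := by
    have h0 : H - H * p = 0 := by
      apply eq_zero_of_mulVec_eq_zero
      intro v
      rw [sub_mulVec, ← mulVec_mulVec]
      have hp0 : p *ᵥ (v - p *ᵥ v) = 0 := by
        rw [mulVec_sub, mulVec_mulVec, hpi]
        simp
      have := hker _ hp0
      rw [mulVec_sub] at this
      rw [sub_eq_zero] at this ⊢
      exact this
    exact (sub_eq_zero.mp h0).symm
  have h2 : p * H = H := by
    have := congrArg conjTranspose h1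
    rwa [conjTranspose_mul, hph, hH] at this
  rw [mul_assoc, h1, h2]

/-- two hermitian idempotents with the same kernel are equal -/
lemma proj_unique {p q : Matrix (Fin n) (Fin n) ℂ} (hph : pᴴ = p) (hpi : p * p = p)
    (hqh : qᴴ = q) (hqi : q * q = q)
    (h : ∀ v, p *ᵥ v = 0 ↔ q *ᵥ v = 0) : p = q := by
  have hqp : q * p = q := by
    have h0 : q - q * p = 0 := by
      apply eq_zero_of_mulVec_eq_zero
      intro v
      rw [sub_mulVec, ← mulVec_mulVec]
      have hp0 : p *ᵥ (v - p *ᵥ v) = 0 := by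
        rw [mulVec_sub, mulVec_mulVec, hpi]; simp
      have := (h _).mp hp0
      rw [mulVec_sub] at this
      rw [sub_eq_zero] at this ⊢
      exact this
    have := sub_eq_zero.mp h0
    exact this.symm
  have hpq : p * q = p := by
    have h0 : p - p * q = 0 := by
      apply eq_zero_of_mulVec_eq_zero
      intro v
      rw [sub_mulVec, ← mulVec_mulVec]
      have hq0 : q *ᵥ (v - q *ᵥ v) = 0 := by
        rw [mulVec_sub, mulVec_mulVec, hqi]; simp
      have := (h _).mpr hq0
      rw [mulVec_sub] at this
      rw [sub_eq_zero] at this ⊢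
      exact this
    have := sub_eq_zero.mp h0
    exact this.symm
  calc p = (p * q)ᴴ := by rw [hpq, hph]
  _ = q * p := by rw [conjTranspose_mul, hph, hqh]
  _ = q := hqp

/-! ### complete positivity implies positivity -/

lemma isCP_posSemidef {Φ : Matrix (Fin n) (Fin n) ℂ → Matrix (Fin n) (Fin n) ℂ}
    (hCP : IsCP Φ) {A : Matrix (Fin n) (Fin n) ℂ} (hA : A.PosSemidef) :
    (Φ A).PosSemidef := by
  have h1 := hCP 1 (A.submatrix Prod.fst Prod.fst) (hA.submatrix _)
  have h2 : Φ A = (tensorAmp 1 Φ (A.submatrix Prod.fst Prod.fst)).submatrix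
      (fun i => (i, (0 : Fin 1))) (fun i => (i, (0 : Fin 1))) := by
    ext i j
    rfl
  rw [h2]
  exact h1.submatrix _

/-! ### the matrix space as a euclidean space -/

noncomputable def matEuc (n : ℕ) :
    Matrix (Fin n) (Fin n) ℂ ≃ₗ[ℂ] EuclideanSpace ℂ (Fin n × Fin n) where
  toFun X := WithLp.toLp 2 (fun q : Fin n × Fin n => X q.1 q.2)
  map_add' _ _ := rfl
  map_smul' _ _ := rfl
  invFun v := Matrix.of fun i j => v (i, j)
  left_inv _ := rfl
  right_inv _ := rfl

lemma matEuc_inner (X Y : Matrix (Fin n) (Fin n) ℂ) :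
    (inner ℂ (matEuc n X) (matEuc n Y) : ℂ) = (Xᴴ * Y).trace := by
  rw [PiLp.inner_apply]
  rw [Matrix.trace]
  simp only [RCLike.inner_apply, Matrix.diag_apply, Matrix.mul_apply, conjTranspose_apply]
  rw [Fintype.sum_prod_type]
  rw [Finset.sum_comm]
  exact Finset.sum_congr rfl fun y _ => Finset.sum_congr rfl fun x _ => mul_comm _ _

/-! ### spectral bound for symmetric operators -/

lemma sym_re_bound {E : Type*} [NormedAddCommGroup E] [InnerProductSpace ℂ E]
    [FiniteDimensional ℂ E]
    (T : E →ₗ[ℂ] E) (hT : T.IsSymmetric) (r : ℝ)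
    (hrad : ∀ (c : ℂ) (v : E), v ≠ 0 → T v = c • v → ‖c‖ ≤ r) (v : E) :
    Complex.re (inner ℂ v (T v)) ≤ r * Complex.re (inner ℂ v v) ∧
      (Complex.re (inner (𝕜 := ℂ) v (T v)) = r * Complex.re (inner (𝕜 := ℂ) v v) →
        T v = (r : ℂ) • v) := by
  classical
  set N := Module.finrank ℂ E with hN
  have hn : Module.finrank ℂ E = N := rfl
  let b := hT.eigenvectorBasis hn
  let μ := hT.eigenvalues hn
  have hb : ∀ i, T (b i) = (μ i : ℂ) • b i := fun i => hT.apply_eigenvectorBasis hn i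
  have hμ : ∀ i, |μ i| ≤ r := by
    intro i
    have hne : b i ≠ 0 := (hT.hasEigenvector_eigenvectorBasis hn i).2
    have := hrad (μ i) (b i) hne (hb i)
    rwa [Complex.norm_real] at this
  set c : Fin N → ℂ := fun i => b.repr v i with hc
  have hTv : ∀ i, b.repr (T v) i = (μ i : ℂ) * c i := fun i =>
    hT.eigenvectorBasis_apply_self_apply hn v i
  have hinner : ∀ w : E, (inner ℂ v w : ℂ) = ∑ i, (starRingEnd ℂ) (c i) * b.repr w i := by
    intro w
    rw [← b.repr.inner_map_map v w, PiLp.inner_apply]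
    simp [RCLike.inner_apply, hc, mul_comm]
  have h1 : (inner ℂ v (T v) : ℂ) = ∑ i, ((μ i : ℂ) * Complex.normSq (c i)) := by
    rw [hinner (T v)]
    congr 1
    funext i
    rw [hTv i, Complex.normSq_eq_conj_mul_self]
    ring
  have h2 : (inner ℂ v v : ℂ) = ∑ i, (Complex.normSq (c i) : ℂ) := by
    rw [hinner v]
    congr 1
    funext i
    rw [Complex.normSq_eq_conj_mul_self]
  have h1re : Complex.re (inner (𝕜 := ℂ) v (T v)) = ∑ i, μ i * Complex.normSq (c i) := by
    rw [h1, Complex.re_sum]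
    congr 1
    funext i
    rw [← Complex.ofReal_mul]
    exact Complex.ofReal_re _
  have h2re : Complex.re (inner (𝕜 := ℂ) v v) = ∑ i, Complex.normSq (c i) := by
    rw [h2, Complex.re_sum]
    simp
  constructor
  · rw [h1re, h2re, Finset.mul_sum]
    apply Finset.sum_le_sum
    intro i _
    exact mul_le_mul_of_nonneg_right ((le_abs_self _).trans (hμ i)) (Complex.normSq_nonneg _)
  · intro heq
    rw [h1re, h2re, Finset.mul_sum] at heq
    have hterm : ∀ i ∈ Finset.univ, (r - μ i) * Complex.normSq (c i) = 0 := by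
      rw [← Finset.sum_eq_zero_iff_of_nonneg]
      · simp only [sub_mul]
        rw [Finset.sum_sub_distrib, ← heq, sub_self]
      · intro i _
        exact mul_nonneg (sub_nonneg.mpr ((le_abs_self _).trans (hμ i))) (Complex.normSq_nonneg _)
    apply b.repr.injective
    apply PiLp.ext
    intro i
    rw [hTv i]
    rw [LinearIsometryEquiv.map_smul]
    have : (μ i : ℂ) * c i = (r : ℂ) * c i := by
      rcases mul_eq_zero.mp (hterm i (Finset.mem_univ i)) with h | h
      · have : μ i = r := by linarith [sub_eq_zero.mp h]
        rw [this]
      · rw [Complex.normSq_eq_zero.mp h, mul_zero, mul_zero]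
    rw [this]
    simp [hc, PiLp.smul_apply, smul_eq_mul]


/-! ### hermitian decomposition of an arbitrary matrix -/

lemma herm_parts (X : Matrix (Fin n) (Fin n) ℂ) :
    ∃ H K : Matrix (Fin n) (Fin n) ℂ, Hᴴ = H ∧ Kᴴ = K ∧
      H - Complex.I • K = X ∧ H + Complex.I • K = Xᴴ ∧
      H = (1/2 : ℂ) • (X + Xᴴ) ∧ K = (Complex.I/2) • (X - Xᴴ) := by
  have hII : Complex.I • ((Complex.I/2) • (X - Xᴴ)) = (-(1/2) : ℂ) • (X - Xᴴ) := by
    rw [smul_smul]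
    congr 1
    rw [show Complex.I * (Complex.I/2) = Complex.I * Complex.I / 2 from
      (mul_div_assoc _ _ _).symm, Complex.I_mul_I]
    norm_num
  refine ⟨(1/2 : ℂ) • (X + Xᴴ), (Complex.I/2) • (X - Xᴴ), ?_, ?_, ?_, ?_, rfl, rfl⟩
  · rw [conjTranspose_smul, conjTranspose_add, conjTranspose_conjTranspose,
      show star (1/2 : ℂ) = (1/2 : ℂ) by norm_num [Complex.ext_iff], add_comm]
  · rw [conjTranspose_smul, conjTranspose_sub, conjTranspose_conjTranspose,
      show star (Complex.I/2 : ℂ) = -(Complex.I/2) by norm_num [Complex.ext_iff],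
      neg_smul, ← smul_neg, neg_sub]
  · rw [hII]; module
  · rw [hII]; module

/-- indicator of nonzero reals -/
noncomputable def indf : ℝ → ℝ := fun x => if x = 0 then 0 else 1

end PFaux

/-- Let `Ψ` be symmetric completely positive with PF eigenvector `Ξ` of maximal
support `p`, and `Ψ₀(X) = Ψ(pXp)` the truncated map. Then the eigenspace of `Ψ` at
the spectral radius `r` coincides with that of `Ψ₀` at `r`, `r` is still the spectral
radius of `Ψ₀`, and every eigenvector `X` of `Ψ` at `r` satisfies `X = pXp`. -/
theorem truncated_map_PF_eigenspace {n : ℕ}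
    (Ψ : Matrix (Fin n) (Fin n) ℂ →ₗ[ℂ] Matrix (Fin n) (Fin n) ℂ)
    (hCP : IsCP (⇑Ψ))
    (hsym : ∀ X Y : Matrix (Fin n) (Fin n) ℂ, (Ψ X * Y).trace = (X * Ψ Y).trace)
    (r : ℝ) (hr : 0 ≤ r)
    (hrad : ∀ (c : ℂ) (Y : Matrix (Fin n) (Fin n) ℂ), Y ≠ 0 → Ψ Y = c • Y → ‖c‖ ≤ r)
    (Ξ : Matrix (Fin n) (Fin n) ℂ) (hΞpos : Ξ.PosSemidef) (hΞne : Ξ ≠ 0)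
    (hΞeig : Ψ Ξ = (r : ℂ) • Ξ)
    (hdom : ∀ X : Matrix (Fin n) (Fin n) ℂ, X.PosSemidef → Ψ X = (r : ℂ) • X →
      ∃ lam : ℝ, 0 < lam ∧ ((lam : ℂ) • Ξ - X).PosSemidef)
    (p : Matrix (Fin n) (Fin n) ℂ) (hph : pᴴ = p) (hpi : p * p = p)
    (hpker : ∀ v : Fin n → ℂ, p *ᵥ v = 0 ↔ Ξ *ᵥ v = 0) :
    (∀ X : Matrix (Fin n) (Fin n) ℂ, Ψ X = (r : ℂ) • X → p * X * p = X) ∧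
    (∀ X : Matrix (Fin n) (Fin n) ℂ, Ψ X = (r : ℂ) • X ↔ Ψ (p * X * p) = (r : ℂ) • X) ∧
    (∀ (c : ℂ) (Y : Matrix (Fin n) (Fin n) ℂ), Y ≠ 0 → Ψ (p * Y * p) = c • Y → ‖c‖ ≤ r) := by
  classical
  open PFaux in
  -- positivity of `Ψ`
  have hpos : ∀ A : Matrix (Fin n) (Fin n) ℂ, A.PosSemidef → (Ψ A).PosSemidef :=
    fun A hA => isCP_posSemidef hCP hA
  -- splitting a hermitian matrix into positive and negative parts
  have hsplit : ∀ (H : Matrix (Fin n) (Fin n) ℂ) (hH : H.IsHermitian),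
      hfun hH (fun x => max x 0) - hfun hH (fun x => max (-x) 0) = H := by
    intro H hH
    rw [hfun_sub]
    have : (fun x : ℝ => max x 0 - max (-x) 0) = fun x : ℝ => x := by
      funext x
      rcases le_total x 0 with h | h
      · rw [max_eq_right h, max_eq_left (by linarith)]; ring
      · rw [max_eq_left h, max_eq_right (by linarith)]; ring
    rw [this, hfun_id']
  -- `Ψ` preserves hermitian matrices
  have hherm : ∀ H : Matrix (Fin n) (Fin n) ℂ, H.IsHermitian → (Ψ H).IsHermitian := by
    intro H hH
    have hp1 : (Ψ (hfun hH (fun x => max x 0))).PosSemidef :=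
      hpos _ (hfun_posSemidef hH _ (fun i => le_max_right _ _))
    have hp2 : (Ψ (hfun hH (fun x => max (-x) 0))).PosSemidef :=
      hpos _ (hfun_posSemidef hH _ (fun i => le_max_right _ _))
    have : Ψ H = Ψ (hfun hH (fun x => max x 0)) - Ψ (hfun hH (fun x => max (-x) 0)) := by
      rw [← _root_.map_sub, hsplit H hH]
    rw [this]
    exact hp1.1.sub hp2.1
  -- `Ψ` commutes with conjugate transposition
  have hstar : ∀ X : Matrix (Fin n) (Fin n) ℂ, Ψ Xᴴ = (Ψ X)ᴴ := by
    intro X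
    obtain ⟨H, K, hHh, hKh, hX, hXc, -, -⟩ := herm_parts X
    have hΨH : (Ψ H)ᴴ = Ψ H := (hherm H hHh).eq
    have hΨK : (Ψ K)ᴴ = Ψ K := (hherm K hKh).eq
    calc Ψ Xᴴ = Ψ (H + Complex.I • K) := by rw [hXc]
    _ = Ψ H + Complex.I • Ψ K := by rw [_root_.map_add, LinearMap.map_smul]
    _ = (Ψ H - Complex.I • Ψ K)ᴴ := by
        rw [conjTranspose_sub, conjTranspose_smul, hΨH, hΨK,
          show star Complex.I = -Complex.I from Complex.conj_I, neg_smul, sub_neg_eq_add]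
    _ = (Ψ (H - Complex.I • K))ᴴ := by rw [_root_.map_sub, LinearMap.map_smul]
    _ = (Ψ X)ᴴ := by rw [hX]
  -- the transported operator on euclidean space
  set T : EuclideanSpace ℂ (Fin n × Fin n) →ₗ[ℂ] EuclideanSpace ℂ (Fin n × Fin n) :=
    ((matEuc n).toLinearMap.comp (Ψ.comp (matEuc n).symm.toLinearMap)) with hTdef
  have hTapp : ∀ X : Matrix (Fin n) (Fin n) ℂ, T (matEuc n X) = matEuc n (Ψ X) := by
    intro X
    simp [hTdef, LinearEquiv.symm_apply_apply]
  have hTsym : T.IsSymmetric := by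
    intro x y
    have hx : x = matEuc n ((matEuc n).symm x) := ((matEuc n).apply_symm_apply x).symm
    have hy : y = matEuc n ((matEuc n).symm y) := ((matEuc n).apply_symm_apply y).symm
    rw [hx, hy, hTapp, hTapp, matEuc_inner, matEuc_inner, ← hstar, hsym]
  have hTrad : ∀ (c : ℂ) (v : EuclideanSpace ℂ (Fin n × Fin n)), v ≠ 0 → T v = c • v →
      ‖c‖ ≤ r := by
    intro c v hv hTv
    apply hrad c ((matEuc n).symm v)
    · exact fun h0 => hv (((matEuc n).symm.map_eq_zero_iff).mp h0)
    · have : T (matEuc n ((matEuc n).symm v)) = c • v := by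
        rwa [(matEuc n).apply_symm_apply]
      rw [hTapp] at this
      apply (matEuc n).injective
      rw [this, _root_.map_smul, (matEuc n).apply_symm_apply]
  -- Step 1: hermitian eigenvectors at `r` are supported in `p`
  have key1 : ∀ H : Matrix (Fin n) (Fin n) ℂ, Hᴴ = H → Ψ H = (r : ℂ) • H →
      p * H * p = H := by
    intro H hHc hHeig
    have hHh : H.IsHermitian := hHc
    have hHppsd : (hfun hHh (fun x => max x 0)).PosSemidef :=
      hfun_posSemidef hHh _ (fun i => le_max_right _ _)
    have hHmpsd : (hfun hHh (fun x => max (-x) 0)).PosSemidef :=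
      hfun_posSemidef hHh _ (fun i => le_max_right _ _)
    have hPpsd : (hfun hHh (fun x => |x|)).PosSemidef :=
      hfun_posSemidef hHh _ (fun i => abs_nonneg _)
    have hPsum : hfun hHh (fun x => max x 0) + hfun hHh (fun x => max (-x) 0)
        = hfun hHh (fun x => |x|) := by
      rw [hfun_add]
      apply hfun_congr
      intro i
      rcases le_total (hHh.eigenvalues i) 0 with h | h
      · rw [max_eq_right h, max_eq_left (by linarith), abs_of_nonpos h]; ring
      · rw [max_eq_left h, max_eq_right (by linarith), abs_of_nonneg h]; ring
    have hPP : hfun hHh (fun x => |x|) * hfun hHh (fun x => |x|) = H * H := by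
      conv_rhs => rw [← hfun_id' hHh]
      rw [hfun_mul, hfun_mul]
      apply hfun_congr
      intro i
      exact abs_mul_abs_self _
    -- trace inequality
    have t1 : 0 ≤ ((hfun hHh (fun x => max x 0) * Ψ (hfun hHh (fun x => max (-x) 0))).trace).re :=
      trace_mul_re_nonneg hHppsd (hpos _ hHmpsd)
    have t2 : 0 ≤ ((hfun hHh (fun x => max (-x) 0) * Ψ (hfun hHh (fun x => max x 0))).trace).re :=
      trace_mul_re_nonneg hHmpsd (hpos _ hHppsd)
    have expand1 : (hfun hHh (fun x => |x|) * Ψ (hfun hHh (fun x => |x|))).trace =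
        (hfun hHh (fun x => max x 0) * Ψ (hfun hHh (fun x => max x 0))).trace +
        (hfun hHh (fun x => max x 0) * Ψ (hfun hHh (fun x => max (-x) 0))).trace +
        (hfun hHh (fun x => max (-x) 0) * Ψ (hfun hHh (fun x => max x 0))).trace +
        (hfun hHh (fun x => max (-x) 0) * Ψ (hfun hHh (fun x => max (-x) 0))).trace := by
      rw [← hPsum, _root_.map_add, mul_add, add_mul, add_mul, Matrix.trace_add,
        Matrix.trace_add, Matrix.trace_add]
      ring
    have expand2 : (H * Ψ H).trace =
        (hfun hHh (fun x => max x 0) * Ψ (hfun hHh (fun x => max x 0))).trace -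
        (hfun hHh (fun x => max x 0) * Ψ (hfun hHh (fun x => max (-x) 0))).trace -
        (hfun hHh (fun x => max (-x) 0) * Ψ (hfun hHh (fun x => max x 0))).trace +
        (hfun hHh (fun x => max (-x) 0) * Ψ (hfun hHh (fun x => max (-x) 0))).trace := by
      have e0 : ((hfun hHh (fun x => max x 0) - hfun hHh (fun x => max (-x) 0)) *
          Ψ (hfun hHh (fun x => max x 0) - hfun hHh (fun x => max (-x) 0))).trace =
          (hfun hHh (fun x => max x 0) * Ψ (hfun hHh (fun x => max x 0))).trace -
          (hfun hHh (fun x => max x 0) * Ψ (hfun hHh (fun x => max (-x) 0))).trace -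
          (hfun hHh (fun x => max (-x) 0) * Ψ (hfun hHh (fun x => max x 0))).trace +
          (hfun hHh (fun x => max (-x) 0) * Ψ (hfun hHh (fun x => max (-x) 0))).trace := by
        rw [_root_.map_sub, mul_sub, sub_mul, sub_mul, Matrix.trace_sub,
          Matrix.trace_sub, Matrix.trace_sub]
        ring
      rw [hsplit H hHh] at e0
      exact e0
    have hle : ((H * Ψ H).trace).re ≤
        ((hfun hHh (fun x => |x|) * Ψ (hfun hHh (fun x => |x|))).trace).re := by
      rw [expand1, expand2]
      simp only [Complex.add_re, Complex.sub_re]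
      linarith
    -- inner product chain
    have e1 : (inner ℂ (matEuc n (hfun hHh (fun x => |x|)))
        (T (matEuc n (hfun hHh (fun x => |x|)))) : ℂ) =
        (hfun hHh (fun x => |x|) * Ψ (hfun hHh (fun x => |x|))).trace := by
      rw [hTapp, matEuc_inner, hfun_conjTranspose]
    have e2 : (inner ℂ (matEuc n (hfun hHh (fun x => |x|)))
        (matEuc n (hfun hHh (fun x => |x|))) : ℂ) = (H * H).trace := by
      rw [matEuc_inner, hfun_conjTranspose, hPP]
    have e4 : (H * Ψ H).trace = (r : ℂ) * (H * H).trace := by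
      rw [hHeig, Matrix.mul_smul, Matrix.trace_smul]
      simp
    obtain ⟨hbnd, heqc⟩ := sym_re_bound T hTsym r hTrad (matEuc n (hfun hHh (fun x => |x|)))
    rw [e1, e2] at hbnd heqc
    have hchain : r * ((H * H).trace).re ≤
        ((hfun hHh (fun x => |x|) * Ψ (hfun hHh (fun x => |x|))).trace).re := by
      have : ((H * Ψ H).trace).re = r * ((H * H).trace).re := by
        rw [e4, Complex.re_ofReal_mul]
      linarith
    have heq : ((hfun hHh (fun x => |x|) * Ψ (hfun hHh (fun x => |x|))).trace).re =
        r * ((H * H).trace).re := le_antisymm hbnd hchain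
    have hPeig : Ψ (hfun hHh (fun x => |x|)) = (r : ℂ) • hfun hHh (fun x => |x|) := by
      have h5 := heqc heq
      rw [hTapp] at h5
      apply (matEuc n).injective
      rw [_root_.map_smul]
      exact h5
    obtain ⟨lam, hlam, hdomP⟩ := hdom _ hPpsd hPeig
    have hkerP : ∀ v, p *ᵥ v = 0 → hfun hHh (fun x => |x|) *ᵥ v = 0 := by
      intro v hv
      apply mulVec_eq_zero_of_dom hPpsd hdomP
      rw [smul_mulVec, (hpker v).mp hv, smul_zero]
    have hkerH : ∀ v, p *ᵥ v = 0 → H *ᵥ v = 0 := by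
      intro v hv
      have h1 := (hfun_mulVec_eq_zero_iff hHh (fun x => |x|) v).mp (hkerP v hv)
      have h2 := hfun_mulVec_eq_zero_iff hHh (fun x => x) v
      rw [hfun_id'] at h2
      apply h2.mpr
      intro i
      rcases mul_eq_zero.mp (h1 i) with h | h
      · rw [Complex.ofReal_eq_zero, abs_eq_zero] at h
        rw [h]
        simp
      · rw [h, mul_zero]
    exact herm_supp hph hpi hHc hkerH
  -- Step 1': all eigenvectors at `r` are supported in `p`
  have claim1 : ∀ X : Matrix (Fin n) (Fin n) ℂ, Ψ X = (r : ℂ) • X → p * X * p = X := by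
    intro X heig
    have hXc' : Ψ Xᴴ = (r : ℂ) • Xᴴ := by
      rw [hstar, heig, conjTranspose_smul]
      congr 1
      simp [Complex.conj_ofReal]
    obtain ⟨H, K, hHh, hKh, hX, hXc, hHf, hKf⟩ := herm_parts X
    have hHeig : Ψ H = (r : ℂ) • H := by
      rw [hHf, LinearMap.map_smul, _root_.map_add, heig, hXc', ← smul_add, smul_comm]
    have hKeig : Ψ K = (r : ℂ) • K := by
      rw [hKf, LinearMap.map_smul, _root_.map_sub, heig, hXc', ← smul_sub, smul_comm]
    have pH := key1 H hHh hHeig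
    have pK := key1 K hKh hKeig
    rw [← hX, mul_sub, sub_mul, Matrix.mul_smul, Matrix.smul_mul, pH, pK]
  -- the support projection `q` of `Ξ` and `p = q`
  have hΞh : Ξ.IsHermitian := hΞpos.1
  have hepos : ∀ i, 0 ≤ hΞh.eigenvalues i := fun i => hΞpos.eigenvalues_nonneg i
  have hqh : (hfun hΞh indf)ᴴ = hfun hΞh indf := hfun_conjTranspose hΞh indf
  have hqi : hfun hΞh indf * hfun hΞh indf = hfun hΞh indf := by
    rw [hfun_mul]
    apply hfun_congr
    intro i
    by_cases h : hΞh.eigenvalues i = 0 <;> simp [indf, h]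
  have hΞiff : ∀ v, Ξ *ᵥ v = 0 ↔ ∀ i, ((hΞh.eigenvalues i : ℂ) *
      ((star (hΞh.eigenvectorUnitary : Matrix (Fin n) (Fin n) ℂ)) *ᵥ v) i = 0) := by
    intro v
    have h2 := hfun_mulVec_eq_zero_iff hΞh (fun x => x) v
    rw [hfun_id'] at h2
    exact h2
  have hqker : ∀ v, hfun hΞh indf *ᵥ v = 0 ↔ Ξ *ᵥ v = 0 := by
    intro v
    rw [hfun_mulVec_eq_zero_iff, hΞiff v]
    constructor
    · intro h i
      by_cases hei : hΞh.eigenvalues i = 0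
      · rw [hei]; simp
      · have := h i
        rw [show indf (hΞh.eigenvalues i) = 1 by simp [indf, hei]] at this
        simp only [Complex.ofReal_one, one_mul] at this
        rw [this, mul_zero]
    · intro h i
      by_cases hei : hΞh.eigenvalues i = 0
      · rw [show indf (hΞh.eigenvalues i) = 0 by simp [indf, hei]]
        simp
      · rcases mul_eq_zero.mp (h i) with h' | h'
        · exact absurd (Complex.ofReal_eq_zero.mp h') hei
        · rw [h', mul_zero]
  have hpq : p = hfun hΞh indf :=
    proj_unique hph hpi hqh hqi (fun v => (hpker v).trans (hqker v).symm)
  -- `ε p ≤ Ξ`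
  obtain ⟨ε, hε, hεΞ⟩ : ∃ ε : ℝ, 0 < ε ∧ (Ξ - (ε : ℂ) • p).PosSemidef := by
    set S := Finset.univ.filter (fun i => hΞh.eigenvalues i ≠ 0) with hS
    rcases Finset.eq_empty_or_nonempty S with hSe | hSne
    · exfalso
      apply hΞne
      have hz : ∀ i, hΞh.eigenvalues i = 0 := by
        intro i
        by_contra h
        have : i ∈ S := Finset.mem_filter.mpr ⟨Finset.mem_univ i, h⟩
        rw [hSe] at this
        exact absurd this (Finset.notMem_empty i)
      calc Ξ = hfun hΞh (fun x => x) := (hfun_id' hΞh).symm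
      _ = hfun hΞh (fun _ => 0) := hfun_congr hΞh _ _ (fun i => hz i)
      _ = 0 := hfun_zero hΞh
    · refine ⟨S.inf' hSne hΞh.eigenvalues, ?_, ?_⟩
      · obtain ⟨i0, hi0, hei⟩ := Finset.exists_mem_eq_inf' hSne hΞh.eigenvalues
        rw [hei]
        exact lt_of_le_of_ne (hepos i0) (Ne.symm (Finset.mem_filter.mp hi0).2)
      · have hkey : Ξ - ((S.inf' hSne hΞh.eigenvalues : ℝ) : ℂ) • p =
            hfun hΞh (fun x => x - S.inf' hSne hΞh.eigenvalues * indf x) := by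
          rw [hpq]
          calc Ξ - ((S.inf' hSne hΞh.eigenvalues : ℝ) : ℂ) • hfun hΞh indf
              = hfun hΞh (fun x => x) -
                hfun hΞh (fun x => S.inf' hSne hΞh.eigenvalues * indf x) := by
                rw [hfun_id', hfun_smul]
          _ = _ := hfun_sub _ _ _
        rw [hkey]
        apply hfun_posSemidef
        intro i
        by_cases hei : hΞh.eigenvalues i = 0
        · simp [indf, hei]
        · have h1 : S.inf' hSne hΞh.eigenvalues ≤ hΞh.eigenvalues i :=
            Finset.inf'_le hΞh.eigenvalues (Finset.mem_filter.mpr ⟨Finset.mem_univ i, hei⟩)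
          rw [show indf (hΞh.eigenvalues i) = 1 by simp [indf, hei]]
          simp only [mul_one]
          linarith
  -- support of images of matrices supported in `p`: PSD case
  have hsupp_psd : ∀ Y : Matrix (Fin n) (Fin n) ℂ, Y.PosSemidef →
      p * Ψ (p * Y * p) * p = Ψ (p * Y * p) := by
    intro Y hY
    have hτ0 : 0 ≤ ∑ i, hY.1.eigenvalues i :=
      Finset.sum_nonneg (fun i _ => hY.eigenvalues_nonneg i)
    have hτY : (((∑ i, hY.1.eigenvalues i : ℝ) : ℂ) • 1 - Y).PosSemidef := by
      have hkey : (((∑ i, hY.1.eigenvalues i : ℝ) : ℂ) • 1 - Y =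
          hfun hY.1 (fun x => (∑ i, hY.1.eigenvalues i) * 1 - x)) := by
        calc ((∑ i, hY.1.eigenvalues i : ℝ) : ℂ) • 1 - Y
            = hfun hY.1 (fun x => (∑ i, hY.1.eigenvalues i) * 1) -
              hfun hY.1 (fun x => x) := by
              rw [hfun_id', ← hfun_one hY.1, hfun_smul]
        _ = _ := hfun_sub _ _ _
      rw [hkey]
      apply hfun_posSemidef
      intro i
      have : hY.1.eigenvalues i ≤ ∑ j, hY.1.eigenvalues j :=
        Finset.single_le_sum (fun j _ => hY.eigenvalues_nonneg j) (Finset.mem_univ i)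
      simp only [mul_one]
      linarith
    have hpYp_psd : (p * Y * p).PosSemidef := by
      have := hY.conjTranspose_mul_mul_same p
      rwa [hph] at this
    have hτp : ((((∑ i, hY.1.eigenvalues i : ℝ) : ℂ)) • p - p * Y * p).PosSemidef := by
      have h1 : p * ((((∑ i, hY.1.eigenvalues i : ℝ) : ℂ)) • 1 - Y) * p =
          (((∑ i, hY.1.eigenvalues i : ℝ) : ℂ)) • p - p * Y * p := by
        rw [mul_sub, sub_mul, Matrix.mul_smul, Matrix.smul_mul, mul_one, hpi]
      have := hτY.conjTranspose_mul_mul_same p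
      rwa [hph, h1] at this
    have hκ0 : 0 ≤ (∑ i, hY.1.eigenvalues i) / ε := div_nonneg hτ0 hε.le
    have hκε : (((∑ i, hY.1.eigenvalues i) / ε : ℝ) : ℂ) * (ε : ℂ) =
        ((∑ i, hY.1.eigenvalues i : ℝ) : ℂ) := by
      push_cast
      field_simp
    have hdom2 : ((((∑ i, hY.1.eigenvalues i) / ε : ℝ) : ℂ) • Ξ - p * Y * p).PosSemidef := by
      have hsum : (((∑ i, hY.1.eigenvalues i) / ε : ℝ) : ℂ) • Ξ - p * Y * p =
          (((∑ i, hY.1.eigenvalues i) / ε : ℝ) : ℂ) • (Ξ - (ε : ℂ) • p) +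
          ((((∑ i, hY.1.eigenvalues i : ℝ) : ℂ)) • p - p * Y * p) := by
        rw [smul_sub, smul_smul, hκε]
        abel
      rw [hsum]
      exact (smul_posSemidef hεΞ hκ0).add hτp
    have hZpsd : (Ψ (p * Y * p)).PosSemidef := hpos _ hpYp_psd
    have hWZ : ((((∑ i, hY.1.eigenvalues i) / ε : ℝ) : ℂ) • ((r : ℂ) • Ξ) -
        Ψ (p * Y * p)).PosSemidef := by
      have := hpos _ hdom2
      rwa [_root_.map_sub, LinearMap.map_smul, hΞeig] at this
    have hkerZ : ∀ v, p *ᵥ v = 0 → Ψ (p * Y * p) *ᵥ v = 0 := by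
      intro v hv
      apply mulVec_eq_zero_of_dom hZpsd hWZ
      rw [smul_mulVec, smul_mulVec, (hpker v).mp hv, smul_zero, smul_zero]
    exact herm_supp hph hpi hZpsd.1.eq hkerZ
  -- support of images, general case
  have hsupp : ∀ Y : Matrix (Fin n) (Fin n) ℂ,
      p * Ψ (p * Y * p) * p = Ψ (p * Y * p) := by
    have hsub : ∀ Y₁ Y₂ : Matrix (Fin n) (Fin n) ℂ,
        (p * Ψ (p * Y₁ * p) * p = Ψ (p * Y₁ * p)) →
        (p * Ψ (p * Y₂ * p) * p = Ψ (p * Y₂ * p)) →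
        (p * Ψ (p * (Y₁ - Y₂) * p) * p = Ψ (p * (Y₁ - Y₂) * p)) := by
      intro Y₁ Y₂ h1 h2
      have h3 : p * (Y₁ - Y₂) * p = p * Y₁ * p - p * Y₂ * p := by
        rw [mul_sub, sub_mul]
      rw [h3, _root_.map_sub, mul_sub, sub_mul, h1, h2]
    have hsmul : ∀ (c : ℂ) (Y : Matrix (Fin n) (Fin n) ℂ),
        (p * Ψ (p * Y * p) * p = Ψ (p * Y * p)) →
        (p * Ψ (p * (c • Y) * p) * p = Ψ (p * (c • Y) * p)) := by
      intro c Y h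
      have h3 : p * (c • Y) * p = c • (p * Y * p) := by
        rw [Matrix.mul_smul, Matrix.smul_mul]
      rw [h3, LinearMap.map_smul, Matrix.mul_smul, Matrix.smul_mul, h]
    have hhermc : ∀ H : Matrix (Fin n) (Fin n) ℂ, H.IsHermitian →
        p * Ψ (p * H * p) * p = Ψ (p * H * p) := by
      intro H hH
      rw [← hsplit H hH]
      exact hsub _ _
        (hsupp_psd _ (hfun_posSemidef hH _ (fun i => le_max_right _ _)))
        (hsupp_psd _ (hfun_posSemidef hH _ (fun i => le_max_right _ _)))
    intro Y
    obtain ⟨H, K, hHh, hKh, hY, -, -, -⟩ := herm_parts Y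
    rw [← hY]
    exact hsub _ _ (hhermc H hHh) (hsmul Complex.I K (hhermc K hKh))
  -- assemble the three claims
  refine ⟨claim1, ?_, ?_⟩
  · intro X
    constructor
    · intro h
      rw [claim1 X h]
      exact h
    · intro h
      by_cases hr0 : r = 0
      · subst hr0
        -- in this case `Ψ = 0`
        have hzero : ∀ M : Matrix (Fin n) (Fin n) ℂ, Ψ M = 0 := by
          intro M
          have hTsymneg : (-T).IsSymmetric := by
            intro x y
            rw [LinearMap.neg_apply, LinearMap.neg_apply, inner_neg_left, inner_neg_right,
              hTsym x y]
          have hTradneg : ∀ (c : ℂ) (v : EuclideanSpace ℂ (Fin n × Fin n)), v ≠ 0 →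
              (-T) v = c • v → ‖c‖ ≤ (0 : ℝ) := by
            intro c v hv hc
            have h5 : T v = (-c) • v := by
              rw [LinearMap.neg_apply] at hc
              rw [← neg_neg (T v), hc, neg_smul]
            simpa using hTrad (-c) v hv h5
          have h1 := (sym_re_bound T hTsym 0 (by simpa using hTrad) (matEuc n M)).1
          have h2 := (sym_re_bound (-T) hTsymneg 0 hTradneg (matEuc n M)).1
          rw [LinearMap.neg_apply, inner_neg_right, Complex.neg_re] at h2
          have heq0 : Complex.re (inner (𝕜 := ℂ) (matEuc n M) (T (matEuc n M))) = 0 := by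
            simp only [zero_mul] at h1 h2
            linarith
          have h3 := (sym_re_bound T hTsym 0 (by simpa using hTrad) (matEuc n M)).2 (by
            rw [heq0]; ring)
          rw [hTapp] at h3
          have h4 : matEuc n (Ψ M) = 0 := by
            rw [h3]
            simp
          rwa [LinearEquiv.map_eq_zero_iff] at h4
        rw [hzero X]
        simp
      · -- `r > 0`
        have h2 := hsupp X
        rw [h] at h2
        have h3 : (r : ℂ) • (p * X * p) = (r : ℂ) • X := by
          rw [← h2, Matrix.mul_smul, Matrix.smul_mul]
        have hrne : (r : ℂ) ≠ 0 := by
          simpa using hr0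
        have h4 : p * X * p = X := smul_right_injective _ hrne h3
        rwa [h4] at h
  · intro c Y hY0 h
    by_cases hc : c = 0
    · rw [hc]
      simpa using hr
    · have h2 := hsupp Y
      rw [h] at h2
      have h3 : c • (p * Y * p) = c • Y := by
        rw [← h2, Matrix.mul_smul, Matrix.smul_mul]
      have h4 : p * Y * p = Y := smul_right_injective _ hc h3
      rw [h4] at h
      exact hrad c Y hY0 h
end

section
/- Let Ψ be a unital completely positive map on a finite-dimensional C*-algebra M admitting a faithful invariant state ρ (ρ∘Ψ = ρ). Then every fixed point of Ψ lies in the multiplicative domain of Ψ; consequently the fixed point set Fix(Ψ) equals the bimodule algebra Bim(Ψ) = {X : Ψ(YX)=Ψ(Y)X and Ψ(XY)=XΨ(Y) for all Y}. -/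
open Matrix
open scoped ComplexOrder

set_option maxHeartbeats 1600000 in
/-- Let `Ψ` be a unital completely positive map on a finite-dimensional C*-algebra `A`
admitting a faithful invariant state `ρ`. Then every fixed point of `Ψ` lies in the
multiplicative domain of `Ψ`; consequently `Fix(Ψ) = Bim(Ψ)`. -/
theorem fix_eq_bim_of_faithful_invariant_state
    (A : Type*) [NormedRing A] [StarRing A] [CStarRing A] [NormedAlgebra ℂ A]
    [StarModule ℂ A] [FiniteDimensional ℂ A]
    (Ψ : A →ₗ[ℂ] A) (hunital : Ψ 1 = 1)
    -- complete positivity: positive matrices over `A` are mapped to positive matrices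
    (hCP : ∀ (k : ℕ) (N : Matrix (Fin k) (Fin k) A),
      ∃ P : Matrix (Fin k) (Fin k) A, (Nᴴ * N).map Ψ = Pᴴ * P)
    (ρ : A →ₗ[ℂ] ℂ)
    (hρpos : ∀ x : A, 0 ≤ ρ (star x * x))
    (hρfaithful : ∀ x : A, ρ (star x * x) = 0 → x = 0)
    (hρ1 : ρ 1 = 1)
    (hinv : ∀ x : A, ρ (Ψ x) = ρ x) :
    (∀ x : A, Ψ x = x → ∀ y : A, Ψ (x * y) = Ψ x * Ψ y ∧ Ψ (y * x) = Ψ y * Ψ x) ∧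
    {x : A | Ψ x = x} =
      {x : A | ∀ y : A, Ψ (y * x) = Ψ y * x ∧ Ψ (x * y) = x * Ψ y} := by
  classical
  -- Step 1: entries of the 2×2 Choi-type matrix
  have entries : ∀ a : A, ∃ p q : Fin 2 → A,
      Ψ (star a * a) = ∑ k, star (p k) * p k ∧
      Ψ (star a) = ∑ k, star (p k) * q k ∧
      Ψ a = ∑ k, star (q k) * p k ∧
      (1 : A) = ∑ k, star (q k) * q k := by
    intro a
    obtain ⟨P, hP⟩ := hCP 2 ![![a, 1], ![0, 0]]
    have hz : ∀ i : Fin 2, (![(0 : A), 0] : Fin 2 → A) i = 0 := by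
      intro i; fin_cases i <;> simp
    have key : ∀ i j, Ψ (star (![![a, 1], ![0, 0]] 0 i) * (![![a, 1], ![0, 0]] 0 j))
        = star (P 0 i) * P 0 j + star (P 1 i) * P 1 j := by
      intro i j
      have h : Ψ (∑ k, star (![![a, 1], ![0, 0]] k i) * ![![a, 1], ![0, 0]] k j)
          = ∑ k, star (P k i) * P k j := congrFun (congrFun hP i) j
      simpa [Matrix.mul_apply, Matrix.conjTranspose_apply, Matrix.map_apply,
        Fin.sum_univ_two, hz] using h
    refine ⟨fun k => P k 0, fun k => P k 1, ?_, ?_, ?_, ?_⟩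
    · simpa [Fin.sum_univ_two] using key 0 0
    · simpa [Fin.sum_univ_two] using key 0 1
    · simpa [Fin.sum_univ_two] using key 1 0
    · rw [Fin.sum_univ_two]; have h := key 1 1; simp [hunital] at h
      simpa using h
  -- Step 2: Ψ is star-preserving
  have hstar : ∀ a : A, Ψ (star a) = star (Ψ a) := by
    intro a
    obtain ⟨p, q, _, h2, h3, _⟩ := entries a
    rw [h2, h3]
    simp [star_sum, StarMul.star_mul]
  -- Step 3: Schwarz defect is a sum of squares
  have defect : ∀ a : A, ∃ c : Fin 2 → A,
      Ψ (star a * a) - star (Ψ a) * Ψ a = ∑ k, star (c k) * c k := by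
    intro a
    obtain ⟨p, q, h1, h2, h3, h4⟩ := entries a
    refine ⟨fun k => p k - q k * Ψ a, ?_⟩
    have expand : ∀ k, star (p k - q k * Ψ a) * (p k - q k * Ψ a)
        = star (p k) * p k - (star (p k) * q k) * Ψ a
          - star (Ψ a) * (star (q k) * p k)
          + star (Ψ a) * ((star (q k) * q k) * Ψ a) := by
      intro k
      simp only [star_sub, StarMul.star_mul]
      noncomm_ring
    calc Ψ (star a * a) - star (Ψ a) * Ψ a
        = Ψ (star a * a) - (Ψ (star a)) * Ψ a - star (Ψ a) * Ψ a
          + star (Ψ a) * ((1 : A) * Ψ a) := by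
          rw [hstar]; noncomm_ring
      _ = (∑ k, star (p k) * p k) - (∑ k, (star (p k) * q k)) * Ψ a
          - star (Ψ a) * (∑ k, star (q k) * p k)
          + star (Ψ a) * ((∑ k, star (q k) * q k) * Ψ a) := by
          rw [h1, h2, h3, h4]
      _ = ∑ k, star (p k - q k * Ψ a) * (p k - q k * Ψ a) := by
          simp only [expand, Finset.sum_add_distrib, Finset.sum_sub_distrib,
            Finset.sum_mul, Finset.mul_sum]
  -- Step 4: ρ facts
  have hdiag : ∀ z : A, (ρ (star z * z)).im = 0 := by
    intro z
    have := hρpos z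
    rw [Complex.le_def] at this
    exact this.2.symm
  have expgen : ∀ w x y : A, star (x + Complex.I • y) * (w * (x + Complex.I • y))
      = star x * (w * x) + Complex.I • (star x * (w * y))
        - Complex.I • (star y * (w * x))
        + (-(Complex.I * Complex.I)) • (star y * (w * y)) := by
    intro w x y
    simp only [star_add, star_smul, Complex.star_def, Complex.conj_I, add_mul,
      mul_add, smul_mul_assoc, mul_smul_comm, smul_smul, neg_smul, neg_mul,
      mul_neg]
    module
  have expgen1 : ∀ w x y : A, star (x + y) * (w * (x + y))
      = star x * (w * x) + star x * (w * y) + star y * (w * x)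
        + star y * (w * y) := by
    intro w x y
    rw [star_add]; noncomm_ring
  have hII : (-(Complex.I * Complex.I)) = 1 := by simp [Complex.I_mul_I]
  have hherm : ∀ x y : A, ρ (star x * y) = starRingEnd ℂ (ρ (star y * x)) := by
    intro x y
    have h1 := hdiag (x + y)
    rw [show star (x+y) * (x+y) = star (x+y) * ((1:A) * (x+y)) by rw [one_mul],
      expgen1] at h1
    simp only [one_mul, map_add] at h1
    have h2 := hdiag (x + Complex.I • y)
    rw [show star (x + Complex.I • y) * (x + Complex.I • y)
        = star (x + Complex.I • y) * ((1:A) * (x + Complex.I • y)) by rw [one_mul],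
      expgen, hII, one_smul] at h2
    simp only [one_mul, map_add, map_sub, LinearMap.map_smul] at h2
    have hx := hdiag x; have hy := hdiag y
    simp only [Complex.add_im, Complex.sub_im, smul_eq_mul, Complex.mul_im,
      Complex.I_re, Complex.I_im, hx, hy, zero_mul, one_mul, add_zero,
      zero_add, mul_zero] at h1 h2
    rw [Complex.ext_iff]
    constructor
    · simp only [Complex.conj_re]; linarith
    · simp only [Complex.conj_im]; linarith
  have hρstar : ∀ a : A, ρ (star a) = starRingEnd ℂ (ρ a) := by
    intro a
    have h := hherm a 1
    rwa [mul_one, star_one, one_mul] at h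
  have hBzero : ∀ B : A, (∀ u : A, ρ (star u * (B * u)) = 0) → B = 0 := by
    intro B hB
    have hall : ∀ u v : A, ρ (star u * (B * v)) = 0 := by
      intro u v
      have e1 := hB (u + v)
      rw [expgen1 B u v, map_add, map_add, map_add, hB u, hB v] at e1
      have e2 := hB (u + Complex.I • v)
      rw [expgen B u v, hII, one_smul, map_add, map_sub, map_add,
        LinearMap.map_smul, LinearMap.map_smul, hB u, hB v] at e2
      simp only [smul_eq_mul, zero_add, add_zero] at e1 e2
      have e2' : ρ (star u * (B * v)) - ρ (star v * (B * u)) = 0 := by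
        have h : Complex.I * (ρ (star u * (B * v)) - ρ (star v * (B * u))) = 0 := by
          linear_combination e2
        rcases mul_eq_zero.mp h with h' | h'
        · exact absurd h' Complex.I_ne_zero
        · exact h'
      linear_combination e1 / 2 + e2' / 2
    have hBB := hall B 1
    rw [mul_one] at hBB
    exact hρfaithful B hBB
  -- helper: positivity of conjugated sums of squares
  have sumpos : ∀ (c : Fin 2 → A) (u : A),
      0 ≤ ρ (star u * ((∑ k, star (c k) * c k) * u)) := by
    intro c u
    have h : star u * ((∑ k, star (c k) * c k) * u)
        = star (c 0 * u) * (c 0 * u) + star (c 1 * u) * (c 1 * u) := by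
      rw [Fin.sum_univ_two]
      simp only [StarMul.star_mul]
      noncomm_ring
    rw [h, map_add]
    exact add_nonneg (hρpos _) (hρpos _)
  -- Step 5: fixed points satisfy Ψ(x* x) = x* x
  have hxsq : ∀ x : A, Ψ x = x → Ψ (star x * x) = star x * x := by
    intro x hx
    obtain ⟨c, hc⟩ := defect x
    rw [hx] at hc
    have hρ0 : ρ (Ψ (star x * x) - star x * x) = 0 := by
      rw [map_sub, hinv]; ring
    rw [hc, Fin.sum_univ_two, map_add] at hρ0
    have h0 := hρpos (c 0)
    have h1 := hρpos (c 1)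
    have hc0 : ρ (star (c 0) * c 0) = 0 := by
      refine le_antisymm ?_ h0
      have h : ρ (star (c 0) * c 0) = -ρ (star (c 1) * c 1) := by
        linear_combination hρ0
      rw [h]
      exact neg_nonpos.mpr h1
    have hc1 : ρ (star (c 1) * c 1) = 0 := by
      rw [hc0, zero_add] at hρ0; exact hρ0
    have hz0 := hρfaithful _ hc0
    have hz1 := hρfaithful _ hc1
    have hzero : Ψ (star x * x) - star x * x = 0 := by
      rw [hc, Fin.sum_univ_two, hz0, hz1]; simp
    have := sub_eq_zero.mp hzero
    exact this
  -- Step 6: fixed points lie in the multiplicative domain (left version)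
  have hmd : ∀ x : A, Ψ x = x → ∀ y : A, Ψ (star x * y) = star x * Ψ y := by
    intro x hx y
    set B := Ψ (star x * y) - star x * Ψ y with hBdef
    set C := Ψ (star y * y) - star (Ψ y) * Ψ y with hCdef
    have hx2 := hxsq x hx
    have hsB : star B = Ψ (star y * x) - star (Ψ y) * x := by
      rw [hBdef, star_sub, ← hstar, StarMul.star_mul, star_star, StarMul.star_mul,
        star_star]
    have hdt : ∀ t : ℂ,
        t • B + (starRingEnd ℂ t) • star B + (t * starRingEnd ℂ t) • C
          = Ψ (star (x + t • y) * (x + t • y))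
            - star (Ψ (x + t • y)) * Ψ (x + t • y) := by
      intro t
      have hΨa : Ψ (x + t • y) = x + t • Ψ y := by
        rw [map_add, LinearMap.map_smul, hx]
      rw [hΨa, hBdef, hsB, hCdef]
      simp only [star_add, star_smul, Complex.star_def, add_mul, mul_add,
        map_add, LinearMap.map_smul, smul_mul_assoc, mul_smul_comm, smul_smul,
        hx2]
      module
    have hquad : ∀ u : A, ∀ t : ℂ,
        0 ≤ t * ρ (star u * (B * u))
          + (starRingEnd ℂ t) * ρ (star u * (star B * u))
          + (t * starRingEnd ℂ t) * ρ (star u * (C * u)) := by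
      intro u t
      obtain ⟨c, hc⟩ := defect (x + t • y)
      have h := (hdt t).trans hc
      have hexp : t * ρ (star u * (B * u))
          + (starRingEnd ℂ t) * ρ (star u * (star B * u))
          + (t * starRingEnd ℂ t) * ρ (star u * (C * u))
          = ρ (star u * ((t • B + (starRingEnd ℂ t) • star B
              + (t * starRingEnd ℂ t) • C) * u)) := by
        rw [add_mul, add_mul, mul_add, mul_add, smul_mul_assoc, smul_mul_assoc,
          smul_mul_assoc, mul_smul_comm, mul_smul_comm, mul_smul_comm, map_add,
          map_add, LinearMap.map_smul, LinearMap.map_smul, LinearMap.map_smul]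
        simp [smul_eq_mul]
      rw [hexp, h]
      exact sumpos c u
    -- conclude B = 0 using the quadratic inequality and faithfulness
    refine sub_eq_zero.mp (hBzero B ?_)
    intro u
    set r := ρ (star u * (B * u)) with hrdef
    set γ := ρ (star u * (C * u)) with hγdef
    have hconj : ρ (star u * (star B * u)) = starRingEnd ℂ r := by
      have h : star u * (star B * u) = star (star u * (B * u)) := by
        simp [StarMul.star_mul, star_star, mul_assoc]
      rw [h, hρstar]
    have hγ0 : 0 ≤ γ := by
      obtain ⟨c, hc⟩ := defect y
      rw [hγdef, hCdef, hc]
      exact sumpos c u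
    have hγre : 0 ≤ γ.re := by rw [Complex.le_def] at hγ0; exact hγ0.1
    have hγim : γ.im = 0 := by rw [Complex.le_def] at hγ0; exact hγ0.2.symm
    have hγeq : γ = (γ.re : ℂ) := Complex.ext rfl (by simp [hγim])
    set s : ℝ := 1 / (γ.re + 1) with hsdef
    have hs : 0 < s := by
      rw [hsdef]; positivity
    have hseq : s * (γ.re + 1) = 1 := by
      rw [hsdef]; field_simp
    have key := hquad u (-(s : ℂ) * starRingEnd ℂ r)
    rw [hconj] at key
    have hre : (-(s : ℂ) * starRingEnd ℂ r) * r
        + (starRingEnd ℂ (-(s : ℂ) * starRingEnd ℂ r)) * (starRingEnd ℂ r)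
        + ((-(s : ℂ) * starRingEnd ℂ r) * starRingEnd ℂ (-(s : ℂ) * starRingEnd ℂ r)) * γ
        = ((Complex.normSq r * (s ^ 2 * γ.re - 2 * s) : ℝ) : ℂ) := by
      rw [hγeq]
      simp only [_root_.map_mul, map_neg, Complex.conj_conj, Complex.conj_ofReal,
        Complex.ofReal_re]
      push_cast
      linear_combination ((s : ℂ) ^ 2 * (γ.re : ℂ) - 2 * (s : ℂ)) * Complex.mul_conj r
    rw [hre] at key
    rw [Complex.zero_le_real] at key
    have h1 : s ^ 2 * γ.re - 2 * s = -s - s ^ 2 := by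
      linear_combination s * hseq
    rw [h1] at key
    have hm' : Complex.normSq r * (s + s ^ 2) ≤ 0 := by nlinarith [key]
    have hsp : (0 : ℝ) < s + s ^ 2 := by positivity
    have hm : Complex.normSq r = 0 := by
      refine le_antisymm ?_ (Complex.normSq_nonneg r)
      nlinarith [hm', hsp]
    exact Complex.normSq_eq_zero.mp hm
  -- Step 7: assemble both statements
  have part1 : ∀ x : A, Ψ x = x → ∀ y : A,
      Ψ (x * y) = Ψ x * Ψ y ∧ Ψ (y * x) = Ψ y * Ψ x := by
    intro x hx y
    have hxs : Ψ (star x) = star x := by rw [hstar, hx]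
    have h1 : Ψ (x * y) = x * Ψ y := by
      have h := hmd (star x) hxs y
      rwa [star_star] at h
    have h2 : Ψ (y * x) = Ψ y * x := by
      calc Ψ (y * x) = star (Ψ (star (y * x))) := by rw [hstar, star_star]
        _ = star (Ψ (star x * star y)) := by rw [StarMul.star_mul]
        _ = star (star x * Ψ (star y)) := by rw [hmd x hx (star y)]
        _ = star (Ψ (star y)) * x := by rw [StarMul.star_mul, star_star]
        _ = Ψ y * x := by rw [hstar, star_star]
    exact ⟨by rw [h1, hx], by rw [h2, hx]⟩
  refine ⟨part1, ?_⟩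
  ext x
  simp only [Set.mem_setOf_eq]
  constructor
  · intro hx y
    obtain ⟨h1, h2⟩ := part1 x hx y
    constructor
    · rw [h2, hx]
    · rw [h1, hx]
  · intro h
    have h1 := (h 1).1
    rwa [one_mul, hunital, one_mul] at h1
end

section
/- For an operator O ∈ B(H_-) ⊗ B(H_+) on a finite-dimensional tensor product, the interaction algebra A_+(O) — the C*-algebra generated by all partial traces Tr_{H_-}(O Q_-) with Q_- ∈ B(H_-) ⊗ I — equals the relative commutant in B(H_+) of Comm_+(O) = {X ∈ B(H_+) : [I⊗X, O] = 0 and [I⊗X, O†] = 0}. -/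
open Matrix Kronecker BigOperators
open scoped ComplexOrder

/-- Partial trace over the first (`H₋`) tensor factor. -/
noncomputable def ptraceL {m n : ℕ} (M : Matrix (Fin m × Fin n) (Fin m × Fin n) ℂ) :
    Matrix (Fin n) (Fin n) ℂ :=
  Matrix.of fun b b' => ∑ a, M (a, b) (a, b')

namespace IAHelper

variable {m n : ℕ}

/-- Slice of an operator on the tensor product. -/
def slice (O : Matrix (Fin m × Fin n) (Fin m × Fin n) ℂ) (a a' : Fin m) :
    Matrix (Fin n) (Fin n) ℂ :=
  Matrix.of fun b b' => O (a, b) (a', b')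

lemma kron_one_comm (Q : Matrix (Fin m) (Fin m) ℂ) (X : Matrix (Fin n) (Fin n) ℂ) :
    (Q ⊗ₖ (1 : Matrix (Fin n) (Fin n) ℂ)) * ((1 : Matrix (Fin m) (Fin m) ℂ) ⊗ₖ X)
      = ((1 : Matrix (Fin m) (Fin m) ℂ) ⊗ₖ X) * (Q ⊗ₖ (1 : Matrix (Fin n) (Fin n) ℂ)) := by
  rw [← Matrix.mul_kronecker_mul, ← Matrix.mul_kronecker_mul, one_mul, mul_one, one_mul, mul_one]

lemma kron_one_conjTranspose (Q : Matrix (Fin m) (Fin m) ℂ) :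
    (Q ⊗ₖ (1 : Matrix (Fin n) (Fin n) ℂ))ᴴ = Qᴴ ⊗ₖ (1 : Matrix (Fin n) (Fin n) ℂ) := by
  ext ⟨i1, i2⟩ ⟨j1, j2⟩
  by_cases h : i2 = j2
  · subst h
    simp [Matrix.conjTranspose_apply, Matrix.kroneckerMap_apply, Matrix.one_apply]
  · simp [Matrix.conjTranspose_apply, Matrix.kroneckerMap_apply, Matrix.one_apply, h, Ne.symm h]

lemma ptraceL_conjTranspose (M : Matrix (Fin m × Fin n) (Fin m × Fin n) ℂ) :
    (ptraceL M)ᴴ = ptraceL Mᴴ := by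
  ext b b'
  simp [ptraceL, Matrix.conjTranspose_apply]

lemma ptraceL_mul_right (M : Matrix (Fin m × Fin n) (Fin m × Fin n) ℂ)
    (X : Matrix (Fin n) (Fin n) ℂ) :
    ptraceL (M * ((1 : Matrix (Fin m) (Fin m) ℂ) ⊗ₖ X)) = ptraceL M * X := by
  ext b b'
  simp only [ptraceL, Matrix.of_apply, Matrix.mul_apply, Fintype.sum_prod_type,
    Matrix.kroneckerMap_apply, Matrix.one_apply]
  simp only [mul_ite, ite_mul, mul_zero, zero_mul, mul_one, one_mul, Finset.sum_ite_irrel,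
    Finset.sum_const_zero, Finset.sum_ite_eq, Finset.sum_ite_eq', Finset.mem_univ, if_true,
    Finset.sum_mul]
  exact Finset.sum_comm

lemma ptraceL_mul_left (M : Matrix (Fin m × Fin n) (Fin m × Fin n) ℂ)
    (X : Matrix (Fin n) (Fin n) ℂ) :
    ptraceL (((1 : Matrix (Fin m) (Fin m) ℂ) ⊗ₖ X) * M) = X * ptraceL M := by
  ext b b'
  simp only [ptraceL, Matrix.of_apply, Matrix.mul_apply, Fintype.sum_prod_type,
    Matrix.kroneckerMap_apply, Matrix.one_apply]
  simp only [mul_ite, ite_mul, mul_zero, zero_mul, mul_one, one_mul, Finset.sum_ite_irrel,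
    Finset.sum_const_zero, Finset.sum_ite_eq, Finset.sum_ite_eq', Finset.mem_univ, if_true,
    Finset.mul_sum]
  exact Finset.sum_comm

lemma mul_kron_left_apply (O : Matrix (Fin m × Fin n) (Fin m × Fin n) ℂ)
    (X : Matrix (Fin n) (Fin n) ℂ) (a a' : Fin m) (b b' : Fin n) :
    (((1 : Matrix (Fin m) (Fin m) ℂ) ⊗ₖ X) * O) (a, b) (a', b')
      = (X * slice O a a') b b' := by
  simp only [Matrix.mul_apply, Fintype.sum_prod_type, Matrix.kroneckerMap_apply,
    Matrix.one_apply, slice, Matrix.of_apply]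
  simp [ite_mul, Finset.sum_ite_eq, Finset.sum_ite_eq']

lemma mul_kron_right_apply (O : Matrix (Fin m × Fin n) (Fin m × Fin n) ℂ)
    (X : Matrix (Fin n) (Fin n) ℂ) (a a' : Fin m) (b b' : Fin n) :
    (O * ((1 : Matrix (Fin m) (Fin m) ℂ) ⊗ₖ X)) (a, b) (a', b')
      = (slice O a a' * X) b b' := by
  simp only [Matrix.mul_apply, Fintype.sum_prod_type, Matrix.kroneckerMap_apply,
    Matrix.one_apply, slice, Matrix.of_apply]
  simp [mul_ite, ite_mul, Finset.sum_ite_eq, Finset.sum_ite_eq']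

lemma comm_iff_slices (O : Matrix (Fin m × Fin n) (Fin m × Fin n) ℂ)
    (X : Matrix (Fin n) (Fin n) ℂ) :
    ((1 : Matrix (Fin m) (Fin m) ℂ) ⊗ₖ X) * O = O * ((1 : Matrix (Fin m) (Fin m) ℂ) ⊗ₖ X)
      ↔ ∀ a a', X * slice O a a' = slice O a a' * X := by
  constructor
  · intro h a a'
    ext b b'
    rw [← mul_kron_left_apply, ← mul_kron_right_apply, h]
  · intro h
    ext ⟨a, b⟩ ⟨a', b'⟩
    rw [mul_kron_left_apply, mul_kron_right_apply, h]

lemma slice_conjTranspose (O : Matrix (Fin m × Fin n) (Fin m × Fin n) ℂ) (a a' : Fin m) :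
    slice Oᴴ a a' = (slice O a' a)ᴴ := rfl

lemma slice_eq_ptraceL (O : Matrix (Fin m × Fin n) (Fin m × Fin n) ℂ) (a a' : Fin m) :
    slice O a a' = ptraceL (O * ((Matrix.single a' a 1) ⊗ₖ (1 : Matrix (Fin n) (Fin n) ℂ))) := by
  ext b b'
  simp only [ptraceL, Matrix.of_apply, Matrix.mul_apply, Fintype.sum_prod_type,
    Matrix.kroneckerMap_apply, Matrix.one_apply, Matrix.single, slice]
  simp [ite_mul, mul_ite, Finset.sum_ite_eq, Finset.sum_ite_eq', ite_and]

/-- Vectorization of a matrix, as a Euclidean space element. -/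
noncomputable def vecE (n : ℕ) : Matrix (Fin n) (Fin n) ℂ ≃ₗ[ℂ] EuclideanSpace ℂ (Fin n × Fin n) where
  toFun M := (WithLp.equiv 2 _).symm fun p => M p.1 p.2
  invFun v := Matrix.of fun i j => v (i, j)
  map_add' _ _ := rfl
  map_smul' _ _ := rfl
  left_inv _ := rfl
  right_inv _ := rfl

lemma vecE_apply (M : Matrix (Fin n) (Fin n) ℂ) (p : Fin n × Fin n) :
    vecE n M p = M p.1 p.2 := rfl

lemma toEuclideanLin_kron (T M : Matrix (Fin n) (Fin n) ℂ) :
    Matrix.toEuclideanLin (T ⊗ₖ (1 : Matrix (Fin n) (Fin n) ℂ)) (vecE n M) = vecE n (T * M) := by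
  apply (WithLp.equiv 2 _).injective
  funext p
  simp only [Matrix.toEuclideanLin_apply, WithLp.equiv_symm_apply, vecE,
    LinearEquiv.coe_mk, Equiv.apply_symm_apply]
  show ((T ⊗ₖ (1 : Matrix (Fin n) (Fin n) ℂ)) *ᵥ fun q => M q.1 q.2) p = (T * M) p.1 p.2
  simp only [Matrix.mulVec, dotProduct, Fintype.sum_prod_type,
    Matrix.kroneckerMap_apply, Matrix.one_apply, Matrix.mul_apply]
  simp [mul_ite, ite_mul, Finset.sum_ite_irrel, Finset.sum_ite_eq, Finset.sum_ite_eq']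

lemma toEuclideanLin_mul (A B : Matrix (Fin n × Fin n) (Fin n × Fin n) ℂ) :
    Matrix.toEuclideanLin (A * B)
      = (Matrix.toEuclideanLin A) ∘ₗ (Matrix.toEuclideanLin B) := by
  apply LinearMap.ext
  intro v
  simp [Matrix.toEuclideanLin_apply, Matrix.mulVec_mulVec]

/-- Finite-dimensional double commutant theorem for star subalgebras of matrices. -/
lemma double_commutant (A : StarSubalgebra ℂ (Matrix (Fin n) (Fin n) ℂ))
    (Y : Matrix (Fin n) (Fin n) ℂ)
    (hY : ∀ X, (∀ T ∈ A, T * X = X * T) → Y * X = X * Y) : Y ∈ A := by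
  classical
  set W : Submodule ℂ (EuclideanSpace ℂ (Fin n × Fin n)) :=
    (Subalgebra.toSubmodule A.toSubalgebra).map (vecE n).toLinearMap with hW
  have memW : ∀ x, x ∈ W ↔ ∃ M ∈ A, vecE n M = x := by
    intro x
    constructor
    · rintro ⟨M, hM, rfl⟩
      exact ⟨M, hM, rfl⟩
    · rintro ⟨M, hM, rfl⟩
      exact ⟨M, hM, rfl⟩
  set Pl : EuclideanSpace ℂ (Fin n × Fin n) →ₗ[ℂ] EuclideanSpace ℂ (Fin n × Fin n) :=
    W.subtype ∘ₗ (Submodule.orthogonalProjectionOnto W).toLinearMap with hPl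
  have hPl_apply : ∀ x, Pl x = (Submodule.orthogonalProjectionOnto W x : EuclideanSpace ℂ (Fin n × Fin n)) :=
    fun x => rfl
  -- invariance: Pl commutes with toEuclideanLin (T ⊗ₖ 1) for T ∈ A
  have hinv : ∀ T ∈ A, ∀ x, Pl (Matrix.toEuclideanLin (T ⊗ₖ (1 : Matrix (Fin n) (Fin n) ℂ)) x)
      = Matrix.toEuclideanLin (T ⊗ₖ (1 : Matrix (Fin n) (Fin n) ℂ)) (Pl x) := by
    intro T hT x
    set L := Matrix.toEuclideanLin (T ⊗ₖ (1 : Matrix (Fin n) (Fin n) ℂ)) with hL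
    have hw : Pl x ∈ W := (Submodule.orthogonalProjectionOnto W x).2
    have hu : x - Pl x ∈ Wᗮ := by exact Submodule.sub_starProjection_mem_orthogonal x
    have hLw : L (Pl x) ∈ W := by
      obtain ⟨M, hM, hMx⟩ := (memW _).1 hw
      refine (memW _).2 ⟨T * M, mul_mem hT hM, ?_⟩
      rw [← toEuclideanLin_kron, hMx]
    have hLu : L (x - Pl x) ∈ Wᗮ := by
      rw [Submodule.mem_orthogonal]
      intro z hz
      obtain ⟨M, hM, hMz⟩ := (memW _).1 hz
      have hadj : (inner ℂ z (L (x - Pl x)) : ℂ)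
          = inner ℂ (Matrix.toEuclideanLin ((T ⊗ₖ (1 : Matrix (Fin n) (Fin n) ℂ))ᴴ) z) (x - Pl x) := by
        rw [Matrix.toEuclideanLin_conjTranspose_eq_adjoint]
        rw [LinearMap.adjoint_inner_left]
      rw [hadj]
      refine (Submodule.mem_orthogonal W _).1 hu _ ?_
      rw [kron_one_conjTranspose]
      obtain ⟨M', hM', hM'z⟩ := (memW _).1 hz
      refine (memW _).2 ⟨Tᴴ * M', mul_mem (star_mem hT) hM', ?_⟩
      rw [← toEuclideanLin_kron, hM'z]
    have hsplit : L x = L (Pl x) + L (x - Pl x) := by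
      rw [← map_add]
      congr 1
      abel
    have h1 : Pl (L (Pl x)) = L (Pl x) := by
      rw [hPl_apply]
      exact Submodule.starProjection_eq_self_iff.2 hLw
    have h2 : Pl (L (x - Pl x)) = 0 := by
      rw [hPl_apply, Submodule.orthogonalProjectionOnto_apply_of_mem_orthogonal hLu]
      rfl
    rw [hsplit, map_add, h1, h2, add_zero]
  -- pass to matrices
  set Pmat : Matrix (Fin n × Fin n) (Fin n × Fin n) ℂ := Matrix.toEuclideanLin.symm Pl with hPmat
  have hPmatL : Matrix.toEuclideanLin Pmat = Pl := Matrix.toEuclideanLin.apply_symm_apply Pl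
  have hcomm : ∀ T ∈ A, Pmat * (T ⊗ₖ (1 : Matrix (Fin n) (Fin n) ℂ))
      = (T ⊗ₖ (1 : Matrix (Fin n) (Fin n) ℂ)) * Pmat := by
    intro T hT
    apply Matrix.toEuclideanLin.injective
    rw [toEuclideanLin_mul, toEuclideanLin_mul, hPmatL]
    exact LinearMap.ext fun x => hinv T hT x
  -- blocks of Pmat
  set Xb : Fin n → Fin n → Matrix (Fin n) (Fin n) ℂ :=
    fun j l => Matrix.of fun i k => Pmat (i, j) (k, l) with hXb
  have e1 : ∀ (B : Matrix (Fin n) (Fin n) ℂ) (i j k' l : Fin n),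
      (Pmat * (B ⊗ₖ (1 : Matrix (Fin n) (Fin n) ℂ))) (i, j) (k', l) = (Xb j l * B) i k' := by
    intro B i j k' l
    simp only [Matrix.mul_apply, Fintype.sum_prod_type, Matrix.kroneckerMap_apply,
      Matrix.one_apply, hXb, Matrix.of_apply]
    simp [mul_ite, ite_mul, mul_zero, zero_mul, mul_one, Finset.sum_ite_irrel,
      Finset.sum_const_zero, Finset.sum_ite_eq, Finset.sum_ite_eq']
  have e2 : ∀ (B : Matrix (Fin n) (Fin n) ℂ) (i j k' l : Fin n),
      ((B ⊗ₖ (1 : Matrix (Fin n) (Fin n) ℂ)) * Pmat) (i, j) (k', l) = (B * Xb j l) i k' := by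
    intro B i j k' l
    simp only [Matrix.mul_apply, Fintype.sum_prod_type, Matrix.kroneckerMap_apply,
      Matrix.one_apply, hXb, Matrix.of_apply]
    simp [mul_ite, ite_mul, mul_zero, zero_mul, mul_one, Finset.sum_ite_irrel,
      Finset.sum_const_zero, Finset.sum_ite_eq, Finset.sum_ite_eq']
  have hXcomm : ∀ j l, ∀ T ∈ A, T * Xb j l = Xb j l * T := by
    intro j l T hT
    ext i k'
    rw [← e2 T i j k' l, ← e1 T i j k' l, hcomm T hT]
  have hYP : Pmat * (Y ⊗ₖ (1 : Matrix (Fin n) (Fin n) ℂ))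
      = (Y ⊗ₖ (1 : Matrix (Fin n) (Fin n) ℂ)) * Pmat := by
    ext ⟨i, j⟩ ⟨k', l⟩
    rw [e1 Y i j k' l, e2 Y i j k' l, hY (Xb j l) (fun T hT => hXcomm j l T hT)]
  -- conclude
  have h1W : vecE n (1 : Matrix (Fin n) (Fin n) ℂ) ∈ W := (memW _).2 ⟨1, one_mem A, rfl⟩
  have hfix : Pl (vecE n 1) = vecE n 1 := by
    rw [hPl_apply]
    exact Submodule.starProjection_eq_self_iff.2 h1W
  have hPY : Pl (vecE n Y) = vecE n Y := by
    have hYvec : vecE n Y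
        = Matrix.toEuclideanLin (Y ⊗ₖ (1 : Matrix (Fin n) (Fin n) ℂ)) (vecE n 1) := by
      rw [toEuclideanLin_kron, mul_one]
    calc Pl (vecE n Y)
        = Matrix.toEuclideanLin (Pmat * (Y ⊗ₖ (1 : Matrix (Fin n) (Fin n) ℂ))) (vecE n 1) := by
          rw [toEuclideanLin_mul, hPmatL]
          exact congrArg Pl hYvec
      _ = Matrix.toEuclideanLin ((Y ⊗ₖ (1 : Matrix (Fin n) (Fin n) ℂ)) * Pmat) (vecE n 1) := by
          rw [hYP]
      _ = Matrix.toEuclideanLin (Y ⊗ₖ (1 : Matrix (Fin n) (Fin n) ℂ)) (Pl (vecE n 1)) := by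
          rw [toEuclideanLin_mul, hPmatL]
          rfl
      _ = vecE n Y := by rw [hfix, hYvec]
  have hmem : vecE n Y ∈ W := by
    rw [← hPY, hPl_apply]
    exact (Submodule.orthogonalProjectionOnto W (vecE n Y)).2
  obtain ⟨M, hM, hMe⟩ := (memW _).1 hmem
  rwa [← (vecE n).injective hMe]

end IAHelper

open IAHelper


/-- The interaction algebra `A₊(O)` of an operator `O` on `H₋ ⊗ H₊` equals the relative
commutant in `B(H₊)` of `Comm₊(O) = {X : [I⊗X, O] = [I⊗X, O†] = 0}`. -/
theorem interaction_algebra_eq_commutant {m n : ℕ}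
    (O : Matrix (Fin m × Fin n) (Fin m × Fin n) ℂ)
    (Y : Matrix (Fin n) (Fin n) ℂ) :
    Y ∈ StarAlgebra.adjoin ℂ
        {Z : Matrix (Fin n) (Fin n) ℂ |
          ∃ Q : Matrix (Fin m) (Fin m) ℂ,
            Z = ptraceL (O * (Q ⊗ₖ (1 : Matrix (Fin n) (Fin n) ℂ)))} ↔
      ∀ X : Matrix (Fin n) (Fin n) ℂ,
        ((1 : Matrix (Fin m) (Fin m) ℂ) ⊗ₖ X) * O = O * ((1 : Matrix (Fin m) (Fin m) ℂ) ⊗ₖ X) →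
        ((1 : Matrix (Fin m) (Fin m) ℂ) ⊗ₖ X) * Oᴴ = Oᴴ * ((1 : Matrix (Fin m) (Fin m) ℂ) ⊗ₖ X) →
        Y * X = X * Y := by
  constructor
  · intro hYmem X hX1 hX2
    have key : ∀ Z ∈ StarAlgebra.adjoin ℂ
        {Z : Matrix (Fin n) (Fin n) ℂ |
          ∃ Q : Matrix (Fin m) (Fin m) ℂ,
            Z = ptraceL (O * (Q ⊗ₖ (1 : Matrix (Fin n) (Fin n) ℂ)))},
        Z * X = X * Z ∧ Zᴴ * X = X * Zᴴ := by
      intro Z hZ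
      induction hZ using StarAlgebra.adjoin_induction with
      | mem Z hZ =>
        obtain ⟨Q, rfl⟩ := hZ
        constructor
        · rw [← ptraceL_mul_right, mul_assoc, kron_one_comm, ← mul_assoc, ← hX1, mul_assoc,
            ptraceL_mul_left]
        · rw [ptraceL_conjTranspose, Matrix.conjTranspose_mul, kron_one_conjTranspose,
            ← ptraceL_mul_right, mul_assoc, ← hX2, ← mul_assoc, kron_one_comm, mul_assoc,
            ptraceL_mul_left]
      | algebraMap r =>
        refine ⟨Algebra.commutes r X, ?_⟩
        rw [← Matrix.star_eq_conjTranspose, ← algebraMap_star_comm]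
        exact Algebra.commutes _ X
      | add x y hx hy hpx hpy =>
        exact ⟨by rw [add_mul, mul_add, hpx.1, hpy.1],
          by rw [Matrix.conjTranspose_add, add_mul, mul_add, hpx.2, hpy.2]⟩
      | mul x y hx hy hpx hpy =>
        constructor
        · rw [mul_assoc, hpy.1, ← mul_assoc, hpx.1, mul_assoc]
        · rw [Matrix.conjTranspose_mul, mul_assoc, hpx.2, ← mul_assoc, hpy.2, mul_assoc]
      | star x hx hpx =>
        constructor
        · rw [Matrix.star_eq_conjTranspose]
          exact hpx.2
        · rw [Matrix.star_eq_conjTranspose, Matrix.conjTranspose_conjTranspose]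
          exact hpx.1
    exact (key Y hYmem).1
  · intro h
    refine double_commutant _ Y ?_
    intro X hX
    refine h X ?_ ?_
    · rw [comm_iff_slices]
      intro a a'
      have hmem : slice O a a' ∈ StarAlgebra.adjoin ℂ
          {Z : Matrix (Fin n) (Fin n) ℂ |
            ∃ Q : Matrix (Fin m) (Fin m) ℂ,
              Z = ptraceL (O * (Q ⊗ₖ (1 : Matrix (Fin n) (Fin n) ℂ)))} :=
        StarAlgebra.subset_adjoin ℂ _ ⟨Matrix.single a' a 1, slice_eq_ptraceL O a a'⟩
      exact (hX _ hmem).symm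
    · rw [comm_iff_slices]
      intro a a'
      rw [slice_conjTranspose]
      have hmem : slice O a' a ∈ StarAlgebra.adjoin ℂ
          {Z : Matrix (Fin n) (Fin n) ℂ |
            ∃ Q : Matrix (Fin m) (Fin m) ℂ,
              Z = ptraceL (O * (Q ⊗ₖ (1 : Matrix (Fin n) (Fin n) ℂ)))} :=
        StarAlgebra.subset_adjoin ℂ _ ⟨Matrix.single a a' 1, slice_eq_ptraceL O a' a⟩
      have hmem' := star_mem hmem
      rw [Matrix.star_eq_conjTranspose] at hmem'
      exact (hX _ hmem').symm
end
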